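/- arXiv:2312.06906 — 7 statements merged into one kernel-verified Lean document; each statement's English description precedes it below -/
import Mathlib

section
/- For all u ∈ {1,…,m}, w ∈ {1,…,n}, and all t ∈ ℝ, the (u, m+w) entry of U_L(X∨Y,t) equals (1 − e^{it(m+n)})/(m+n). -/
open Matrix Complex

/-- Transition matrix `exp(itM)` of the continuous quantum walk whose Hamiltonian is the
real symmetric matrix `M` (the matrix exponential is taken over `ℂ`). -/
noncomputable def transU {N : Type*} [Fintype N] [DecidableEq N]
    (M : Matrix N N ℝ) (t : ℝ) : Matrix N N ℂ :=
  NormedSpace.exp ((Complex.I * (t : ℂ)) • M.map (fun x : ℝ => (x : ℂ)))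

/-- Laplacian matrix of the join `X ∨ Y` of two weighted graphs with Laplacian
matrices `LX` and `LY`. -/
noncomputable def joinL (m n : ℕ) (LX : Matrix (Fin m) (Fin m) ℝ)
    (LY : Matrix (Fin n) (Fin n) ℝ) :
    Matrix (Fin m ⊕ Fin n) (Fin m ⊕ Fin n) ℝ :=
  Matrix.fromBlocks (LX + (n : ℝ) • (1 : Matrix (Fin m) (Fin m) ℝ))
    (-(Matrix.of fun _ _ => (1 : ℝ)))
    (-(Matrix.of fun _ _ => (1 : ℝ)))
    (LY + (m : ℝ) • (1 : Matrix (Fin n) (Fin n) ℝ))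

/-- Adjacency matrix of the join `X ∨ Y` of two weighted graphs with adjacency
matrices `AX` and `AY`. -/
noncomputable def joinA (m n : ℕ) (AX : Matrix (Fin m) (Fin m) ℝ)
    (AY : Matrix (Fin n) (Fin n) ℝ) :
    Matrix (Fin m ⊕ Fin n) (Fin m ⊕ Fin n) ℝ :=
  Matrix.fromBlocks AX (Matrix.of fun _ _ => (1 : ℝ))
    (Matrix.of fun _ _ => (1 : ℝ)) AY

/-- `lam` is an eigenvalue of the matrix `M`. -/
def IsEigenvalue {N : Type*} [Fintype N] (M : Matrix N N ℝ) (lam : ℝ) : Prop :=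
  ∃ w : N → ℝ, w ≠ 0 ∧ M.mulVec w = lam • w

/-- The eigenvalue support `σ_u(M)` of the vertex `u`: all eigenvalues `lam` of `M` having
an eigenvector `w` with `w u ≠ 0`. -/
def eigSupport {N : Type*} [Fintype N] (M : Matrix N N ℝ) (u : N) : Set ℝ :=
  {lam | ∃ w : N → ℝ, w ≠ 0 ∧ M.mulVec w = lam • w ∧ w u ≠ 0}

/-- Vertices `u` and `v` are strongly cospectral with respect to `M`: for each eigenvalue,
either all eigenvectors have equal `u`,`v` entries, or all have opposite `u`,`v` entries. -/
def StronglyCospectral {N : Type*} [Fintype N] (M : Matrix N N ℝ) (u v : N) : Prop :=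
  ∀ lam : ℝ, IsEigenvalue M lam →
    (∀ w : N → ℝ, M.mulVec w = lam • w → w u = w v) ∨
    (∀ w : N → ℝ, M.mulVec w = lam • w → w u = -(w v))

/-- `σ_{uv}^-(M)`: eigenvalues in the support of `u` all of whose eigenvectors `w`
satisfy `w u = - w v`. -/
def sigmaMinus {N : Type*} [Fintype N] (M : Matrix N N ℝ) (u v : N) : Set ℝ :=
  {lam | lam ∈ eigSupport M u ∧ ∀ w : N → ℝ, M.mulVec w = lam • w → w u = -(w v)}

/-- The vertex `u` is periodic with respect to `M`. -/
noncomputable def PeriodicAt {N : Type*} [Fintype N] [DecidableEq N]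
    (M : Matrix N N ℝ) (u : N) : Prop :=
  ∃ τ : ℝ, 0 < τ ∧ ‖transU M τ u u‖ = 1

/-- Perfect state transfer occurs between vertices `u` and `v` with respect to `M`. -/
noncomputable def HasPST {N : Type*} [Fintype N] [DecidableEq N]
    (M : Matrix N N ℝ) (u v : N) : Prop :=
  ∃ τ : ℝ, 0 < τ ∧ ‖transU M τ u v‖ = 1

/-!
Adding the all-ones matrix `J` to `L` cancels the off-diagonal blocks, so `L + J` is block
diagonal and `exp (it(L + J))` vanishes on `X × Y`. Zero row and column sums give
`L J = J L = 0`, and `J² = (m + n) J`; hence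
`exp (it(L + J)) = exp (itL) exp (itJ) = exp (itL) + ((e^{it(m+n)} - 1)/(m + n)) J`,
and the `(u, m + w)` entry of this identity is the claim.
-/

open NormedSpace

namespace Matrix

variable {N : Type*} [Fintype N] [DecidableEq N]

theorem exp_mul_of_mul_eq_smul {A K : Matrix N N ℂ} {μ : ℂ} (h : A * K = μ • K) :
    exp A * K = Complex.exp μ • K := by
  open scoped Norms.Operator in
  have hK : SemiconjBy K (algebraMap ℂ _ μ) A := by
    rw [SemiconjBy, ← Algebra.commutes, ← Algebra.smul_def, h]
  have := hK.exp_right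
  rw [SemiconjBy, ← algebraMap_exp_comm, ← Algebra.commutes, ← Algebra.smul_def,
    ← Complex.exp_eq_exp_ℂ] at this
  exact this.symm

theorem exp_smul_of_mul_self_eq_smul {K : Matrix N N ℂ} {μ : ℂ} (hμ : μ ≠ 0)
    (hK : K * K = μ • K) (s : ℂ) :
    exp (s • K) = 1 + ((Complex.exp (s * μ) - 1) / μ) • K := by
  -- `1 = (1 - μ⁻¹ • K) + μ⁻¹ • K` splits off the `0`- and `μ`-eigenparts of `K`.
  have hrange : exp (s • K) * K = Complex.exp (s * μ) • K :=
    exp_mul_of_mul_eq_smul (by rw [smul_mul_assoc, hK, smul_smul])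
  have hker : exp (s • K) * (1 - μ⁻¹ • K) = 1 - μ⁻¹ • K := by
    simpa using exp_mul_of_mul_eq_smul (A := s • K) (K := 1 - μ⁻¹ • K) (μ := 0) (by
      rw [mul_sub, mul_one, smul_mul_assoc, mul_smul_comm, hK, smul_smul, smul_smul,
        mul_assoc, inv_mul_cancel₀ hμ, mul_one, sub_self, zero_smul])
  calc exp (s • K) = exp (s • K) * (1 - μ⁻¹ • K) + μ⁻¹ • (exp (s • K) * K) := by
        rw [mul_sub, mul_one, mul_smul_comm]; abel
    _ = _ := by
        rw [hker, hrange, smul_smul, sub_eq_add_neg, add_assoc, ← neg_smul, ← add_smul]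
        congr 2
        field_simp
        ring

theorem ones_mul_ones {ι R : Type*} [Fintype ι] [NonAssocSemiring R] :
    (of fun _ _ => (1 : R) : Matrix ι ι R) * of (fun _ _ => 1) =
      Fintype.card ι • of fun _ _ => 1 := by
  ext i j
  simp [mul_apply]

end Matrix

section Join

variable {m n : ℕ} {LX : Matrix (Fin m) (Fin m) ℝ} {LY : Matrix (Fin n) (Fin n) ℝ}

theorem joinL_mul_ones (hLX : ∀ i, ∑ j, LX i j = 0) (hLY : ∀ i, ∑ j, LY i j = 0) :
    joinL m n LX LY * of (fun _ _ => 1) = 0 := by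
  ext i j
  rcases i with a | a <;>
    simp [joinL, mul_apply, Fintype.sum_sum_type, Finset.sum_add_distrib, one_apply, hLX, hLY]

theorem joinL_isSymm (hLX : LX.IsSymm) (hLY : LY.IsSymm) : (joinL m n LX LY).IsSymm :=
  (hLX.add (isSymm_one.smul _)).fromBlocks (by ext; simp) (hLY.add (isSymm_one.smul _))

theorem ones_mul_joinL (hLXsymm : LX.IsSymm) (hLXrow : ∀ i, ∑ j, LX i j = 0)
    (hLYsymm : LY.IsSymm) (hLYrow : ∀ i, ∑ j, LY i j = 0) :
    of (fun _ _ => 1) * joinL m n LX LY = 0 := by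
  have h := congrArg transpose (joinL_mul_ones hLXrow hLYrow)
  rw [transpose_mul, (joinL_isSymm hLXsymm hLYsymm).eq, transpose_zero] at h
  exact h

theorem blockTriangular_joinL_add_ones :
    (joinL m n LX LY + of fun _ _ => 1).BlockTriangular Sum.isLeft := by
  rintro (i | i) (j | j) h <;> simp_all [joinL]

end Join

theorem stmt0_general (m n : ℕ)
    (LX : Matrix (Fin m) (Fin m) ℝ) (LY : Matrix (Fin n) (Fin n) ℝ)
    (hLXsymm : LX.IsSymm) (hLXrow : ∀ i, ∑ j, LX i j = 0)
    (hLYsymm : LY.IsSymm) (hLYrow : ∀ i, ∑ j, LY i j = 0) :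
    ∀ (u : Fin m) (w : Fin n) (t : ℝ),
      transU (joinL m n LX LY) t (Sum.inl u) (Sum.inr w) =
        (1 - Complex.exp (Complex.I * (t : ℂ) * ((m : ℂ) + (n : ℂ)))) / ((m : ℂ) + (n : ℂ)) := by
  intro u w t
  set φ : Matrix (Fin m ⊕ Fin n) (Fin m ⊕ Fin n) ℝ →+* Matrix _ _ ℂ := ofRealHom.mapMatrix
  set L := φ (joinL m n LX LY)
  set J := φ (of fun _ _ => 1)
  set c := I * t
  set μ : ℂ := m + n
  have hLJ : L * J = 0 := by rw [← map_mul, joinL_mul_ones hLXrow hLYrow, map_zero]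
  have hJL : J * L = 0 := by
    rw [← map_mul, ones_mul_joinL hLXsymm hLXrow hLYsymm hLYrow, map_zero]
  have hJJ : J * J = μ • J := by
    rw [← map_mul, ones_mul_ones, map_nsmul, ← Nat.cast_smul_eq_nsmul ℂ]
    simp [μ, J]
  have hμ : μ ≠ 0 := by have := u.pos; simp only [μ]; norm_cast; omega
  have hexpL : exp (c • L) * J = J := by
    simpa using exp_mul_of_mul_eq_smul (μ := 0) (by rw [smul_mul_assoc, hLJ, smul_zero, zero_smul])
  have hsplit : exp (c • (L + J)) = exp (c • L) + ((Complex.exp (c * μ) - 1) / μ) • J := by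
    have hcomm : Commute L J := hLJ.trans hJL.symm
    rw [smul_add, Matrix.exp_add_of_commute _ _ ((hcomm.smul_left c).smul_right c),
      exp_smul_of_mul_self_eq_smul hμ hJJ, mul_add, mul_one, mul_smul_comm, hexpL]
  have hblock : exp (c • (L + J)) (Sum.inl u) (Sum.inr w) = 0 := by
    have hB : (L + J).BlockTriangular Sum.isLeft := by
      rw [← map_add]; exact blockTriangular_joinL_add_ones.map ofRealHom
    refine BlockTriangular.exp (b := Sum.isLeft) (fun i j h => ?_) Bool.false_lt_true
    rw [Matrix.smul_apply, hB h, smul_zero]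
  show exp (c • L) (Sum.inl u) (Sum.inr w) = _
  rw [eq_sub_of_add_eq hsplit.symm, Matrix.sub_apply, hblock, Matrix.smul_apply]
  simp [J, φ]
  ring

theorem stmt0 (m n : ℕ) (hm : 1 ≤ m) (hn : 1 ≤ n)
    (LX : Matrix (Fin m) (Fin m) ℝ) (LY : Matrix (Fin n) (Fin n) ℝ)
    (hLXsymm : LX.IsSymm) (hLXrow : ∀ i, ∑ j, LX i j = 0)
    (hLYsymm : LY.IsSymm) (hLYrow : ∀ i, ∑ j, LY i j = 0) :
    ∀ (u : Fin m) (w : Fin n) (t : ℝ),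
      transU (joinL m n LX LY) t (Sum.inl u) (Sum.inr w) =
        (1 - Complex.exp (Complex.I * (t : ℂ) * ((m : ℂ) + (n : ℂ)))) / ((m : ℂ) + (n : ℂ)) :=
  stmt0_general m n LX LY hLXsymm hLXrow hLYsymm hLYrow
end

section
/- For all u, v ∈ {1,…,m} and all t ∈ ℝ, U_L(X∨Y,t)_{u,v} = e^{itn}·U_L(X,t)_{u,v} + 1/(m+n) + n·e^{it(m+n)}/(m(m+n)) − e^{itn}/m. -/
open Matrix Complex

/-!
Write `J` for the all-ones matrix. Over `ℂ` the Laplacian of the join splits as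
`L = (m + n) • 1 + diag(B_X, B_Y) - J` with `B_X = L_X + J - m • 1` and `B_Y = L_Y + J - n • 1`;
the zero row and column sums make `L_X`, `B_X`, `B_Y` and `diag(B_X, B_Y)` annihilate `J` on both
sides. As `J / k` is idempotent for a `k × k` matrix, `exp (a • 1 + K + s • J)` equals
`eᵃ • (exp K + ((e^(s k) - 1) / k) • J)` whenever `K J = J K = 0`. Applying this to `t • L` and then
to the block `t • B_X` computes the `X`-block of `exp (i t L)`.
-/

open NormedSpace

local notation "𝐉" => Matrix.of fun _ _ => 1

namespace NormedSpace

variable {𝔸 : Type*} [NormedRing 𝔸] [NormedAlgebra ℂ 𝔸] [CompleteSpace 𝔸]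

theorem exp_mul_eq_of_mul_eq_zero {a b : 𝔸} (h : a * b = 0) : exp a * b = b := by
  have hterm : (fun k : ℕ => ((k.factorial : ℂ)⁻¹ • a ^ k) * b) =
      fun k => if k = 0 then b else 0 := by
    funext k
    cases k with
    | zero => simp
    | succ k => simp [pow_succ, mul_assoc, h]
  have hs := (exp_series_hasSum_exp' (𝕂 := ℂ) a).mul_right b
  rw [hterm] at hs
  exact hs.unique (hasSum_ite_eq 0 b)

theorem exp_smul_of_isIdempotentElem {q : 𝔸} (hq : IsIdempotentElem q) (w : ℂ) :
    exp (w • q) = 1 + (Complex.exp w - 1) • q := by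
  have hterm : (fun k : ℕ => (k.factorial : ℂ)⁻¹ • (w • q) ^ k) =
      fun k => ((k.factorial : ℂ)⁻¹ * w ^ k) • q + if k = 0 then 1 - q else 0 := by
    funext k
    cases k with
    | zero => simp
    | succ k => simp [smul_pow, hq.pow_succ_eq, smul_smul]
  have hs := exp_series_hasSum_exp' (𝕂 := ℂ) (w • q)
  rw [hterm] at hs
  have hscalar : HasSum (fun k : ℕ => (k.factorial : ℂ)⁻¹ * w ^ k) (Complex.exp w) := by
    simpa [Complex.exp_eq_exp_ℂ] using exp_series_hasSum_exp' (𝕂 := ℂ) w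
  rw [hs.unique ((hscalar.smul_const q).add (hasSum_ite_eq 0 _)), sub_smul, one_smul]
  abel

variable [NormedAlgebra ℚ 𝔸]

theorem exp_add_smul_of_isIdempotentElem {a q : 𝔸} (hq : IsIdempotentElem q)
    (haq : a * q = 0) (hqa : q * a = 0) (w : ℂ) :
    exp (a + w • q) = exp a + (Complex.exp w - 1) • q := by
  have hcomm : Commute a q := haq.trans hqa.symm
  rw [exp_add_of_commute (hcomm.smul_right w), exp_smul_of_isIdempotentElem hq, mul_add, mul_one,
    mul_smul_comm, exp_mul_eq_of_mul_eq_zero haq]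

theorem exp_smul_one_add (c : ℂ) (a : 𝔸) : exp (c • (1 : 𝔸) + a) = Complex.exp c • exp a := by
  rw [exp_add_of_commute ((Commute.one_left a).smul_left c), ← Algebra.algebraMap_eq_smul_one,
    ← algebraMap_exp_comm, Complex.exp_eq_exp_ℂ, Algebra.smul_def]

end NormedSpace

theorem HasSum.matrix_fromBlocks {X R l m n o : Type*} [AddCommMonoid R] [TopologicalSpace R]
    {fA : X → Matrix n l R} {fB : X → Matrix n m R} {fC : X → Matrix o l R}
    {fD : X → Matrix o m R} {A : Matrix n l R} {B : Matrix n m R} {C : Matrix o l R}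
    {D : Matrix o m R} (hA : HasSum fA A) (hB : HasSum fB B) (hC : HasSum fC C)
    (hD : HasSum fD D) :
    HasSum (fun x => fromBlocks (fA x) (fB x) (fC x) (fD x)) (fromBlocks A B C D) := by
  refine Pi.hasSum.2 fun i => Pi.hasSum.2 fun j => ?_
  rcases i with i | i <;> rcases j with j | j
  · exact Pi.hasSum.1 (Pi.hasSum.1 hA i) j
  · exact Pi.hasSum.1 (Pi.hasSum.1 hB i) j
  · exact Pi.hasSum.1 (Pi.hasSum.1 hC i) j
  · exact Pi.hasSum.1 (Pi.hasSum.1 hD i) j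

namespace Matrix

theorem exp_fromBlocks_diagonal {l m : Type*} [Fintype l] [Fintype m] [DecidableEq l]
    [DecidableEq m] (A : Matrix l l ℂ) (D : Matrix m m ℂ) :
    exp (fromBlocks A 0 0 D) = fromBlocks (exp A) 0 0 (exp D) := by
  open scoped Norms.Operator in
  refine (exp_series_hasSum_exp' (𝕂 := ℂ) (fromBlocks A 0 0 D)).unique ?_
  simp_rw [fromBlocks_diagonal_pow, fromBlocks_smul, smul_zero]
  open scoped Norms.Operator in
  exact (exp_series_hasSum_exp' A).matrix_fromBlocks hasSum_zero hasSum_zero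
    (exp_series_hasSum_exp' D)

section Ones

variable {k l r α : Type*}

theorem ones_mul_ones_s1 [Fintype l] [NonAssocSemiring α] :
    (𝐉 : Matrix k l α) * (𝐉 : Matrix l r α) = (Fintype.card l : α) • 𝐉 := by
  ext i j
  simp [mul_apply]

theorem mul_ones_eq_zero [Fintype l] [NonAssocSemiring α] {K : Matrix k l α} (h : K *ᵥ 1 = 0) :
    K * (𝐉 : Matrix l r α) = 0 := by
  ext i j
  simpa [mul_apply, mulVec, dotProduct] using congrFun h i

theorem ones_mul_eq_zero [Fintype k] [NonAssocSemiring α] {K : Matrix k l α} (h : 1 ᵥ* K = 0) :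
    (𝐉 : Matrix r k α) * K = 0 := by
  ext i j
  simpa [mul_apply, vecMul, dotProduct] using congrFun h j

variable [Fintype k]

def AnnihilatesOnes [NonAssocSemiring α] (K : Matrix k k α) : Prop :=
  K *ᵥ 1 = 0 ∧ 1 ᵥ* K = 0

theorem IsSymm.annihilatesOnes [CommSemiring α] {K : Matrix k k α} (hsymm : K.IsSymm)
    (hrow : ∀ i, ∑ j, K i j = 0) : AnnihilatesOnes K := by
  refine ⟨funext fun i => ?_, funext fun j => ?_⟩
  · simpa [mulVec, dotProduct] using hrow i
  · simpa [vecMul, dotProduct, hsymm.apply j] using hrow j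

theorem AnnihilatesOnes.map {β : Type*} [NonAssocSemiring α] [NonAssocSemiring β]
    {K : Matrix k k α} (hK : AnnihilatesOnes K) (f : α →+* β) : AnnihilatesOnes (K.map f) := by
  refine ⟨funext fun i => ?_, funext fun j => ?_⟩
  · simpa [mulVec, dotProduct] using congrArg f (congrFun hK.1 i)
  · simpa [vecMul, dotProduct] using congrArg f (congrFun hK.2 j)

theorem AnnihilatesOnes.smul [CommSemiring α] {K : Matrix k k α} (hK : AnnihilatesOnes K)
    (c : α) : AnnihilatesOnes (c • K) :=
  ⟨by rw [smul_mulVec, hK.1, smul_zero], by rw [vecMul_smul, hK.2, smul_zero]⟩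

theorem AnnihilatesOnes.fromBlocks [Fintype l] [NonAssocSemiring α] {A : Matrix k k α}
    {D : Matrix l l α} (hA : AnnihilatesOnes A) (hD : AnnihilatesOnes D) :
    AnnihilatesOnes (Matrix.fromBlocks A 0 0 D) := by
  have hinl : (1 : k ⊕ l → α) ∘ Sum.inl = 1 := rfl
  have hinr : (1 : k ⊕ l → α) ∘ Sum.inr = 1 := rfl
  refine ⟨?_, ?_⟩
  · rw [fromBlocks_mulVec, hinl, hinr, hA.1, hD.1]
    ext (i | i) <;> simp
  · rw [vecMul_fromBlocks, hinl, hinr, hA.2, hD.2]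
    ext (i | i) <;> simp

theorem AnnihilatesOnes.neg_card_smul_one_add_add_ones [DecidableEq k] [CommRing α]
    {K : Matrix k k α} (hK : AnnihilatesOnes K) :
    AnnihilatesOnes (-(Fintype.card k : α) • 1 + K + 𝐉) := by
  refine ⟨?_, ?_⟩
  · rw [add_mulVec, add_mulVec, hK.1, smul_mulVec, one_mulVec]
    ext i
    simp [mulVec, dotProduct]
  · rw [vecMul_add, vecMul_add, hK.2, vecMul_smul, vecMul_one]
    ext i
    simp [vecMul, dotProduct]

theorem exp_smul_one_add_add_smul_ones [DecidableEq k] [Nonempty k] {K : Matrix k k ℂ}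
    (hK : AnnihilatesOnes K) (a s : ℂ) :
    exp (a • 1 + K + s • 𝐉) =
      Complex.exp a • (exp K + ((Complex.exp (s * Fintype.card k) - 1) / Fintype.card k) • 𝐉) := by
  set N : ℂ := (Fintype.card k : ℂ)
  have hN : N ≠ 0 := Nat.cast_ne_zero.2 Fintype.card_ne_zero
  have hQ : IsIdempotentElem (N⁻¹ • 𝐉 : Matrix k k ℂ) := by
    rw [IsIdempotentElem, smul_mul_smul_comm, ones_mul_ones_s1, smul_smul]
    exact congrArg (· • _) (inv_mul_cancel_right₀ hN N⁻¹)
  have hKQ : K * (N⁻¹ • 𝐉 : Matrix k k ℂ) = 0 := by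
    rw [mul_smul_comm, mul_ones_eq_zero hK.1, smul_zero]
  have hQK : (N⁻¹ • 𝐉 : Matrix k k ℂ) * K = 0 := by
    rw [smul_mul_assoc, ones_mul_eq_zero hK.2, smul_zero]
  have hsJ : s • (𝐉 : Matrix k k ℂ) = (s * N) • (N⁻¹ • 𝐉 : Matrix k k ℂ) := by
    rw [smul_smul, mul_assoc, mul_inv_cancel₀ hN, mul_one]
  rw [add_assoc, hsJ]
  open scoped Norms.Operator in
  refine (exp_smul_one_add a _).trans ?_
  open scoped Norms.Operator in
  rw [exp_add_smul_of_isIdempotentElem hQ hKQ hQK, smul_smul, div_eq_mul_inv]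
  -- the two sides differ only in the topology (operator norm vs. entrywise) fed to `exp`
  rfl

end Ones

end Matrix

section Join

variable {m n : ℕ} {LX : Matrix (Fin m) (Fin m) ℝ} {LY : Matrix (Fin n) (Fin n) ℝ}

theorem joinL_map_ofReal :
    (joinL m n LX LY).map Complex.ofReal =
      ((m : ℂ) + n) • 1 +
        fromBlocks (-(m : ℂ) • 1 + LX.map Complex.ofReal + 𝐉) 0 0
          (-(n : ℂ) • 1 + LY.map Complex.ofReal + 𝐉) +
        (-1 : ℂ) • 𝐉 := by
  ext (i | i) (j | j) <;> simp [joinL, one_apply] <;> split_ifs <;> push_cast <;> ring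

theorem transU_joinL_inl_inl (hm : 1 ≤ m) (hX : AnnihilatesOnes (LX.map Complex.ofReal))
    (hY : AnnihilatesOnes (LY.map Complex.ofReal)) (t : ℝ) (u v : Fin m) :
    transU (joinL m n LX LY) t (Sum.inl u) (Sum.inl v) =
      Complex.exp (Complex.I * t * (m + n)) *
        (Complex.exp (-(Complex.I * t * m)) *
            (transU LX t u v + (Complex.exp (Complex.I * t * m) - 1) / m) +
          (Complex.exp (-(Complex.I * t) * (m + n)) - 1) / (m + n)) := by
  have : Nonempty (Fin m) := ⟨⟨0, hm⟩⟩
  have : Nonempty (Fin m ⊕ Fin n) := ⟨Sum.inl ⟨0, hm⟩⟩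
  have hBX := hX.neg_card_smul_one_add_add_ones
  have hBY := hY.neg_card_smul_one_add_add_ones
  rw [Fintype.card_fin] at hBX hBY
  have hXblock : NormedSpace.exp ((Complex.I * t) • (-(m : ℂ) • 1 + LX.map Complex.ofReal + 𝐉)) =
      Complex.exp (-(Complex.I * t * m)) •
        (transU LX t + ((Complex.exp (Complex.I * t * m) - 1) / m) • 𝐉) := by
    have h := exp_smul_one_add_add_smul_ones (hX.smul (Complex.I * t)) (-(Complex.I * t * m))
      (Complex.I * t)
    rw [Fintype.card_fin] at h
    rw [smul_add, smul_add, smul_smul, mul_neg, h, transU]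
  have hjoin := exp_smul_one_add_add_smul_ones ((hBX.fromBlocks hBY).smul (Complex.I * t))
    (Complex.I * t * (m + n)) (-(Complex.I * t))
  rw [Fintype.card_sum, Fintype.card_fin, Fintype.card_fin, Nat.cast_add] at hjoin
  rw [transU, joinL_map_ofReal, smul_add, smul_add, smul_smul, smul_smul, mul_neg_one, hjoin,
    fromBlocks_smul, smul_zero, smul_zero, exp_fromBlocks_diagonal, hXblock]
  simp only [Matrix.add_apply, Matrix.smul_apply, fromBlocks_apply₁₁, of_apply, smul_eq_mul,
    mul_one]

end Join

theorem stmt1_general (m n : ℕ) (hm : 1 ≤ m)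
    (LX : Matrix (Fin m) (Fin m) ℝ) (LY : Matrix (Fin n) (Fin n) ℝ)
    (hLXsymm : LX.IsSymm) (hLXrow : ∀ i, ∑ j, LX i j = 0)
    (hLYsymm : LY.IsSymm) (hLYrow : ∀ i, ∑ j, LY i j = 0) :
    ∀ (u v : Fin m) (t : ℝ),
      transU (joinL m n LX LY) t (Sum.inl u) (Sum.inl v) =
        Complex.exp (Complex.I * (t : ℂ) * (n : ℂ)) * transU LX t u v
          + 1 / ((m : ℂ) + (n : ℂ))
          + (n : ℂ) * Complex.exp (Complex.I * (t : ℂ) * ((m : ℂ) + (n : ℂ)))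
              / ((m : ℂ) * ((m : ℂ) + (n : ℂ)))
          - Complex.exp (Complex.I * (t : ℂ) * (n : ℂ)) / (m : ℂ) := by
  intro u v t
  rw [transU_joinL_inl_inl hm ((hLXsymm.annihilatesOnes hLXrow).map Complex.ofRealHom)
    ((hLYsymm.annihilatesOnes hLYrow).map Complex.ofRealHom)]
  have hm0 : (m : ℂ) ≠ 0 := Nat.cast_ne_zero.2 (by omega)
  have hmn : (m : ℂ) + n ≠ 0 := by exact_mod_cast (by omega : m + n ≠ 0)
  have hsplit : Complex.I * t * (m + n) = Complex.I * t * m + Complex.I * t * n := by ring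
  rw [neg_mul, hsplit, Complex.exp_neg, Complex.exp_neg, Complex.exp_add]
  field_simp
  ring

theorem stmt1 (m n : ℕ) (hm : 1 ≤ m) (hn : 1 ≤ n)
    (LX : Matrix (Fin m) (Fin m) ℝ) (LY : Matrix (Fin n) (Fin n) ℝ)
    (hLXsymm : LX.IsSymm) (hLXrow : ∀ i, ∑ j, LX i j = 0)
    (hLYsymm : LY.IsSymm) (hLYrow : ∀ i, ∑ j, LY i j = 0) :
    ∀ (u v : Fin m) (t : ℝ),
      transU (joinL m n LX LY) t (Sum.inl u) (Sum.inl v) =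
        Complex.exp (Complex.I * (t : ℂ) * (n : ℂ)) * transU LX t u v
          + 1 / ((m : ℂ) + (n : ℂ))
          + (n : ℂ) * Complex.exp (Complex.I * (t : ℂ) * ((m : ℂ) + (n : ℂ)))
              / ((m : ℂ) * ((m : ℂ) + (n : ℂ)))
          - Complex.exp (Complex.I * (t : ℂ) * (n : ℂ)) / (m : ℂ) :=
  stmt1_general m n hm LX LY hLXsymm hLXrow hLYsymm hLYrow
end

section
/- For all u ∈ {1,…,m}, w ∈ {1,…,n}, and all t ∈ ℝ, the (u, m+w) entry of U_A(X∨Y,t) equals (e^{itλ⁺} − e^{itλ⁻})/√D. -/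
open Matrix Complex

/-! Let `v_s = A^s e_w` be the `w`-th column of `A^s`. By induction, `v_s` is constant (say `c_s`)
on `X`, and with `d_s` its sum over `Y` the pair evolves as
`(c_{s+1}, d_{s+1}) = (k c_s + d_s, m n c_s + ℓ d_s)`. The characteristic polynomial of this
recurrence is `(x - k)(x - ℓ) - m n`, with roots `λ±`, so `√D · c_s = λ₊^s - λ₋^s`.
Summing the exponential series entrywise gives the formula. -/

open scoped Nat

namespace Matrix

variable {N 𝕂 : Type*} [Fintype N] [DecidableEq N] [RCLike 𝕂]

theorem hasSum_exp_apply (M : Matrix N N 𝕂) (i j : N) :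
    HasSum (fun s : ℕ => (s !⁻¹ : 𝕂) • (M ^ s) i j) (NormedSpace.exp M i j) := by
  open scoped Norms.Operator in
  exact Pi.hasSum.mp (Pi.hasSum.mp (NormedSpace.exp_series_hasSum_exp' (𝕂 := 𝕂) M) i) j

theorem exp_apply_of_pow_apply {M : Matrix N N 𝕂} {i j : N} {c p q : 𝕂}
    (h : ∀ s : ℕ, (M ^ s) i j = c * (p ^ s - q ^ s)) :
    NormedSpace.exp M i j = c * (NormedSpace.exp p - NormedSpace.exp q) := by
  have hterms : (fun s : ℕ => (s !⁻¹ : 𝕂) • (M ^ s) i j)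
      = fun s => c * ((s !⁻¹ : 𝕂) • p ^ s - (s !⁻¹ : 𝕂) • q ^ s) := by
    funext s
    simp only [h, smul_eq_mul]
    ring
  refine (hasSum_exp_apply M i j).unique ?_
  rw [hterms]
  exact ((NormedSpace.exp_series_hasSum_exp' p).sub
    (NormedSpace.exp_series_hasSum_exp' q)).mul_left c

end Matrix

theorem transU_apply_of_pow_apply {N : Type*} [Fintype N] [DecidableEq N]
    {M : Matrix N N ℝ} {i j : N} {c p q : ℝ}
    (h : ∀ s : ℕ, (M ^ s) i j = c * (p ^ s - q ^ s)) (t : ℝ) :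
    transU M t i j = c * (Complex.exp (I * t * p) - Complex.exp (I * t * q)) := by
  rw [Complex.exp_eq_exp_ℂ]
  refine Matrix.exp_apply_of_pow_apply fun s => ?_
  have hmap : M.map (fun x : ℝ => (x : ℂ)) = M.map Complex.ofRealHom := rfl
  rw [hmap, smul_pow, ← Matrix.map_pow, Matrix.smul_apply, Matrix.map_apply, h s,
    Complex.ofRealHom_eq_coe]
  push_cast
  ring

section Join

variable {m n : ℕ} {AX : Matrix (Fin m) (Fin m) ℝ} {AY : Matrix (Fin n) (Fin n) ℝ}

theorem joinA_mulVec_inl {k c : ℝ} (hAX : ∀ i, ∑ j, AX i j = k) {v : Fin m ⊕ Fin n → ℝ}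
    (hv : ∀ u, v (Sum.inl u) = c) (u : Fin m) :
    (joinA m n AX AY *ᵥ v) (Sum.inl u) = k * c + ∑ w, v (Sum.inr w) := by
  simp [joinA, mulVec, dotProduct, Fintype.sum_sum_type, hv, ← Finset.sum_mul, hAX]

theorem sum_joinA_mulVec_inr {ℓ c : ℝ} (hAY : ∀ j, ∑ i, AY i j = ℓ) {v : Fin m ⊕ Fin n → ℝ}
    (hv : ∀ u, v (Sum.inl u) = c) :
    ∑ w, (joinA m n AX AY *ᵥ v) (Sum.inr w) = m * n * c + ℓ * ∑ w, v (Sum.inr w) := by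
  simp only [joinA, mulVec, dotProduct, Fintype.sum_sum_type, fromBlocks_apply₂₁,
    fromBlocks_apply₂₂, of_apply, one_mul, hv, Finset.sum_add_distrib, Finset.sum_const,
    Finset.card_univ, Fintype.card_fin, nsmul_eq_mul]
  rw [Finset.sum_comm]
  simp_rw [← Finset.sum_mul, hAY, ← Finset.mul_sum]
  ring

theorem joinA_pow_apply_inl_inr {k ℓ p q : ℝ} (hAX : ∀ i, ∑ j, AX i j = k)
    (hAY : ∀ j, ∑ i, AY i j = ℓ) (hp : (p - k) * (p - ℓ) = m * n)
    (hq : (q - k) * (q - ℓ) = m * n) (u : Fin m) (w : Fin n) (s : ℕ) :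
    (p - q) * (joinA m n AX AY ^ s) (Sum.inl u) (Sum.inr w) = p ^ s - q ^ s := by
  set v : ℕ → Fin m ⊕ Fin n → ℝ :=
    fun s => joinA m n AX AY ^ s *ᵥ Pi.single (Sum.inr w) (p - q)
  have hcolumn : ∀ s, (∀ u, v s (Sum.inl u) = p ^ s - q ^ s) ∧
      ∑ w', v s (Sum.inr w') = p ^ s * (p - k) - q ^ s * (q - k) := by
    intro s
    induction s with
    | zero => simp [v, one_apply]
    | succ s ih =>
      have hv : v (s + 1) = joinA m n AX AY *ᵥ v s := by
        simp only [v, pow_succ', ← mulVec_mulVec]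
      refine ⟨fun u' => ?_, ?_⟩
      · rw [hv, joinA_mulVec_inl hAX ih.1, ih.2]
        ring
      · rw [hv, sum_joinA_mulVec_inr hAY ih.1, ih.2]
        linear_combination q ^ s * hq - p ^ s * hp
  simpa [v, mul_comm] using (hcolumn s).1 u

end Join

theorem stmt2_general (m n : ℕ) (k ℓ : ℝ)
    (AX : Matrix (Fin m) (Fin m) ℝ) (AY : Matrix (Fin n) (Fin n) ℝ)
    (hAXrow : ∀ i, ∑ j, AX i j = k)
    (hAYsymm : AY.IsSymm) (hAYrow : ∀ i, ∑ j, AY i j = ℓ)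
    (D lamPlus lamMinus : ℝ)
    (hD : D = (k - ℓ) ^ 2 + 4 * m * n)
    (hPlus : lamPlus = (k + ℓ + Real.sqrt D) / 2)
    (hMinus : lamMinus = (k + ℓ - Real.sqrt D) / 2) :
    ∀ (u : Fin m) (w : Fin n) (t : ℝ),
      transU (joinA m n AX AY) t (Sum.inl u) (Sum.inr w) =
        (Complex.exp (Complex.I * (t : ℂ) * (lamPlus : ℂ))
          - Complex.exp (Complex.I * (t : ℂ) * (lamMinus : ℂ))) / ((Real.sqrt D : ℝ) : ℂ) := by
  intro u w t
  have hD_pos : 0 < D := by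
    have := u.pos
    have := w.pos
    rw [hD]
    positivity
  have hsqrt : Real.sqrt D ^ 2 = D := Real.sq_sqrt hD_pos.le
  have hAYcol : ∀ j, ∑ i, AY i j = ℓ := fun j => by simpa only [hAYsymm.apply] using hAYrow j
  have hp : (lamPlus - k) * (lamPlus - ℓ) = m * n := by
    rw [hPlus]
    linear_combination hsqrt / 4 + hD / 4
  have hq : (lamMinus - k) * (lamMinus - ℓ) = m * n := by
    rw [hMinus]
    linear_combination hsqrt / 4 + hD / 4
  have hpow : ∀ s : ℕ, (joinA m n AX AY ^ s) (Sum.inl u) (Sum.inr w)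
      = (Real.sqrt D)⁻¹ * (lamPlus ^ s - lamMinus ^ s) := fun s => by
    rw [← joinA_pow_apply_inl_inr hAXrow hAYcol hp hq u w s, hPlus, hMinus]
    field_simp [(Real.sqrt_pos.mpr hD_pos).ne']
    ring
  rw [transU_apply_of_pow_apply hpow, div_eq_inv_mul, Complex.ofReal_inv]

theorem stmt2 (m n : ℕ) (hm : 1 ≤ m) (hn : 1 ≤ n) (k ℓ : ℝ)
    (AX : Matrix (Fin m) (Fin m) ℝ) (AY : Matrix (Fin n) (Fin n) ℝ)
    (hAXsymm : AX.IsSymm) (hAXnonneg : ∀ i j, 0 ≤ AX i j) (hAXrow : ∀ i, ∑ j, AX i j = k)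
    (hAYsymm : AY.IsSymm) (hAYnonneg : ∀ i j, 0 ≤ AY i j) (hAYrow : ∀ i, ∑ j, AY i j = ℓ)
    (D lamPlus lamMinus : ℝ)
    (hD : D = (k - ℓ) ^ 2 + 4 * m * n)
    (hPlus : lamPlus = (k + ℓ + Real.sqrt D) / 2)
    (hMinus : lamMinus = (k + ℓ - Real.sqrt D) / 2) :
    ∀ (u : Fin m) (w : Fin n) (t : ℝ),
      transU (joinA m n AX AY) t (Sum.inl u) (Sum.inr w) =
        (Complex.exp (Complex.I * (t : ℂ) * (lamPlus : ℂ))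
          - Complex.exp (Complex.I * (t : ℂ) * (lamMinus : ℂ))) / ((Real.sqrt D : ℝ) : ℂ) :=
  stmt2_general m n k ℓ AX AY hAXrow hAYsymm hAYrow D lamPlus lamMinus hD hPlus hMinus
end

section
/- For all u, v ∈ {1,…,m} and all t ∈ ℝ, U_A(X∨Y,t)_{u,v} = U_A(X,t)_{u,v} + e^{itλ⁺}(k−λ⁻)/(m√D) − e^{itλ⁻}(k−λ⁺)/(m√D) − e^{itk}/m. -/
open Matrix Complex

/-!
The X-supported vectors with coordinate sum zero form an `A`-invariant subspace on which `A` acts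
as `A_X`; the centering matrix `I - J/m`, placed in the X-rows, intertwines `A` with `A_X`.
The vectors constant on X and constant on Y form an invariant plane on which `A` acts as
`[[k, n], [m, ℓ]]`, with eigenvalues `λ±` (the roots of `(λ - k)(λ - ℓ) = mn`).
Splitting `e_v = (e_v - 𝟙_X / m) + 𝟙_X / m` accordingly expresses `U(X∨Y)_{uv}` through
`U(X)_{uv}`, the X-row sums of `U(X∨Y)` (read off the plane) and the column sums `e^{itk}` of
`U(X)`.
-/

namespace Matrix

variable {𝕂 : Type*} [RCLike 𝕂] {m n : Type*} [Fintype m] [DecidableEq m] [Fintype n]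
  [DecidableEq n]

theorem hasSum_exp_series (A : Matrix m m 𝕂) :
    HasSum (fun p : ℕ => (p.factorial : 𝕂)⁻¹ • A ^ p) (NormedSpace.exp A) := by
  -- Completeness must be found for the product uniformity, before the operator norm is installed.
  have hcomplete : CompleteSpace (Matrix m m 𝕂) := inferInstance
  let : NormedRing (Matrix m m 𝕂) := Matrix.linftyOpNormedRing
  let : NormedAlgebra 𝕂 (Matrix m m 𝕂) := Matrix.linftyOpNormedAlgebra
  exact @NormedSpace.exp_series_hasSum_exp' 𝕂 (Matrix m m 𝕂) _ _ _ _ _ hcomplete A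

theorem exp_mul_eq_mul_exp_of_mul_eq_mul {A : Matrix m m 𝕂} {B : Matrix m n 𝕂}
    {C : Matrix n n 𝕂} (h : A * B = B * C) :
    NormedSpace.exp A * B = B * NormedSpace.exp C := by
  have hpow : ∀ p : ℕ, A ^ p * B = B * C ^ p := by
    intro p
    induction p with
    | zero => simp
    | succ p ih => rw [pow_succ, Matrix.mul_assoc, h, ← Matrix.mul_assoc, ih, Matrix.mul_assoc,
        ← pow_succ]
  have hA := (hasSum_exp_series A).map (addMonoidHomMulRight B)
    (continuous_id.matrix_mul continuous_const)
  have hC := (hasSum_exp_series C).map (addMonoidHomMulLeft B)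
    (continuous_const.matrix_mul continuous_id)
  refine hA.unique ?_
  simpa [Function.comp_def, addMonoidHomMulRight, addMonoidHomMulLeft, hpow] using hC

theorem exp_mulVec_of_mulVec_eq_smul {A : Matrix m m 𝕂} {w : m → 𝕂} {μ : 𝕂}
    (h : A *ᵥ w = μ • w) : NormedSpace.exp A *ᵥ w = NormedSpace.exp μ • w := by
  have hpow : ∀ p : ℕ, A ^ p *ᵥ w = μ ^ p • w := by
    intro p
    induction p with
    | zero => simp
    | succ p ih => rw [pow_succ', ← mulVec_mulVec, ih, mulVec_smul, h, smul_smul, ← pow_succ]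
  have hA := (hasSum_exp_series A).map (mulVec.addMonoidHomLeft w)
    (continuous_id.matrix_mulVec continuous_const)
  refine hA.unique ?_
  simpa [Function.comp_def, mulVec.addMonoidHomLeft, hpow, smul_smul, smul_mulVec] using
    (NormedSpace.exp_series_hasSum_exp' (𝕂 := 𝕂) μ).smul_const w

end Matrix

section transU

variable {α β : Type*} [Fintype α] [DecidableEq α] [Fintype β] [DecidableEq β]

theorem transU_mul_eq_mul_transU_of_mul_eq_mul {M : Matrix α α ℝ} {B : Matrix α β ℝ}
    {N : Matrix β β ℝ} (h : M * B = B * N) (t : ℝ) :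
    transU M t * B.map (fun x : ℝ => (x : ℂ)) = B.map (fun x : ℝ => (x : ℂ)) * transU N t := by
  refine Matrix.exp_mul_eq_mul_exp_of_mul_eq_mul ?_
  rw [Matrix.smul_mul, Matrix.mul_smul]
  congr 1
  exact (Matrix.map_mul (f := ofRealHom)).symm.trans (h ▸ Matrix.map_mul)

theorem transU_mulVec_of_mulVec_eq_smul {M : Matrix α α ℝ} {w : α → ℝ} {μ : ℝ}
    (h : M *ᵥ w = μ • w) (t : ℝ) :
    transU M t *ᵥ (fun i => (w i : ℂ)) = Complex.exp (I * t * μ) • fun i => (w i : ℂ) := by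
  have hcast : (M.map fun x : ℝ => (x : ℂ)) *ᵥ (fun i => (w i : ℂ)) =
      fun i => ((M *ᵥ w) i : ℂ) :=
    funext fun i => (RingHom.map_mulVec ofRealHom M w i).symm
  rw [Complex.exp_eq_exp_ℂ]
  refine Matrix.exp_mulVec_of_mulVec_eq_smul ?_
  rw [smul_mulVec, hcast, h]
  ext i
  simp [mul_assoc]

theorem sum_transU_apply_of_isSymm {M : Matrix α α ℝ} {k : ℝ} (hsymm : M.IsSymm)
    (hrow : ∀ i, ∑ j, M i j = k) (t : ℝ) (v : α) :
    ∑ i, transU M t i v = Complex.exp (I * t * k) := by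
  have hsymmU : (transU M t).IsSymm := ((hsymm.map _).smul _).exp
  have hone : M *ᵥ (fun _ => 1) = k • fun _ => 1 := by
    ext i
    simp [mulVec, dotProduct, hrow]
  have hrowU := congrFun (transU_mulVec_of_mulVec_eq_smul hone t) v
  simp only [mulVec, dotProduct, Complex.ofReal_one, mul_one, Pi.smul_apply,
    smul_eq_mul] at hrowU
  rw [← hrowU]
  exact Finset.sum_congr rfl fun i _ => hsymmU.apply v i

end transU

noncomputable def centeringMatrix (ι : Type*) [Fintype ι] [DecidableEq ι] : Matrix ι ι ℝ :=
  1 - (Fintype.card ι : ℝ)⁻¹ • of fun _ _ => 1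

section centering

variable {ι κ : Type*} [Fintype ι] [DecidableEq ι]

theorem allOnes_mul_centeringMatrix :
    (of fun _ _ => 1 : Matrix κ ι ℝ) * centeringMatrix ι = 0 := by
  rcases isEmpty_or_nonempty ι with hι | hι
  · exact Subsingleton.elim _ _
  have hcard : (Fintype.card ι : ℝ) ≠ 0 := Nat.cast_ne_zero.mpr Fintype.card_ne_zero
  rw [centeringMatrix, Matrix.mul_sub, Matrix.mul_one, Matrix.mul_smul]
  ext a j
  simp [mul_apply, hcard]

theorem centeringMatrix_mul_comm_of_isSymm {A : Matrix ι ι ℝ} {k : ℝ} (hsymm : A.IsSymm)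
    (hrow : ∀ i, ∑ j, A i j = k) : centeringMatrix ι * A = A * centeringMatrix ι := by
  have hcol : ∀ j, ∑ i, A i j = k := fun j => by simpa [hsymm.apply] using hrow j
  rw [centeringMatrix, Matrix.sub_mul, Matrix.mul_sub, Matrix.one_mul, Matrix.mul_one,
    Matrix.smul_mul, Matrix.mul_smul]
  congr 2
  ext i j
  simp [mul_apply, hrow, hcol]

end centering

section join

variable {m n : ℕ} {AX : Matrix (Fin m) (Fin m) ℝ} {AY : Matrix (Fin n) (Fin n) ℝ} {k ℓ : ℝ}

theorem joinA_mulVec_sumElim_const (hAXrow : ∀ i, ∑ j, AX i j = k)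
    (hAYrow : ∀ i, ∑ j, AY i j = ℓ) (a b : ℝ) :
    joinA m n AX AY *ᵥ Sum.elim (fun _ => a) (fun _ => b) =
      Sum.elim (fun _ => k * a + n * b) (fun _ => m * a + ℓ * b) := by
  ext (i | i) <;>
    simp [joinA, mulVec, dotProduct, ← Finset.mul_sum, hAXrow, hAYrow, mul_comm]

theorem joinA_mulVec_eq_smul (hAXrow : ∀ i, ∑ j, AX i j = k)
    (hAYrow : ∀ i, ∑ j, AY i j = ℓ) (hn : n ≠ 0) {μ : ℝ} (hμ : (μ - k) * (μ - ℓ) = m * n) :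
    joinA m n AX AY *ᵥ Sum.elim (fun _ => 1) (fun _ => (μ - k) / n) =
      μ • Sum.elim (fun _ => 1) (fun _ => (μ - k) / n) := by
  have hn' : (n : ℝ) ≠ 0 := Nat.cast_ne_zero.mpr hn
  rw [joinA_mulVec_sumElim_const hAXrow hAYrow]
  ext (i | i)
  · simp only [Sum.elim_inl, Pi.smul_apply, smul_eq_mul]
    field_simp
    ring
  · simp only [Sum.elim_inr, Pi.smul_apply, smul_eq_mul]
    field_simp
    linear_combination -hμ

-- Without the ascription on `0`, the product elaborates through `CStarMatrix`.
theorem joinA_mul_fromRows_centeringMatrix (hAXsymm : AX.IsSymm)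
    (hAXrow : ∀ i, ∑ j, AX i j = k) :
    joinA m n AX AY * fromRows (centeringMatrix (Fin m)) (0 : Matrix (Fin n) (Fin m) ℝ) =
      fromRows (centeringMatrix (Fin m)) 0 * AX := by
  rw [joinA, Matrix.fromBlocks_mul_fromRows, Matrix.fromRows_mul, allOnes_mul_centeringMatrix,
    ← centeringMatrix_mul_comm_of_isSymm hAXsymm hAXrow]
  simp

theorem transU_joinA_inl_inl (hAXsymm : AX.IsSymm) (hAXrow : ∀ i, ∑ j, AX i j = k)
    (t : ℝ) (u v : Fin m) :
    transU (joinA m n AX AY) t (Sum.inl u) (Sum.inl v) =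
      transU AX t u v + (∑ j, transU (joinA m n AX AY) t (Sum.inl u) (Sum.inl j)
        - ∑ j, transU AX t j v) / m := by
  have h := congrFun (congrFun (transU_mul_eq_mul_transU_of_mul_eq_mul
    (joinA_mul_fromRows_centeringMatrix (AY := AY) hAXsymm hAXrow) t) (Sum.inl u)) v
  simp [mul_apply, Fintype.sum_sum_type, centeringMatrix, one_apply, apply_ite Complex.ofReal,
    sub_mul, mul_sub, Finset.sum_sub_distrib, ← Finset.sum_mul, ← Finset.mul_sum] at h
  linear_combination h

theorem sum_transU_joinA_inl (hAXrow : ∀ i, ∑ j, AX i j = k)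
    (hAYrow : ∀ i, ∑ j, AY i j = ℓ) (hn : n ≠ 0) {p q : ℝ}
    (hp : (p - k) * (p - ℓ) = m * n) (hq : (q - k) * (q - ℓ) = m * n) (hpq : p ≠ q)
    (t : ℝ) (u : Fin m) :
    ∑ j, transU (joinA m n AX AY) t (Sum.inl u) (Sum.inl j) =
      (Complex.exp (I * t * p) * (k - q) - Complex.exp (I * t * q) * (k - p)) / (p - q) := by
  set U := transU (joinA m n AX AY) t
  have hpq' : (p : ℂ) - q ≠ 0 := sub_ne_zero.mpr (by exact_mod_cast hpq)
  have hn' : (n : ℝ) ≠ 0 := Nat.cast_ne_zero.mpr hn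
  let w : ℝ → Fin m ⊕ Fin n → ℝ := fun μ => Sum.elim (fun _ => 1) (fun _ => (μ - k) / n)
  have hsplit : (fun s => ((Sum.elim (fun _ => 1) (fun _ => 0) s : ℝ) : ℂ)) =
      ((k - q) / (p - q) : ℂ) • (fun s => (w p s : ℂ)) -
        ((k - p) / (p - q) : ℂ) • (fun s => (w q s : ℂ)) := by
    ext (i | i) <;>
    · simp [w]
      field_simp
      ring
  have hsum : ∑ j, U (Sum.inl u) (Sum.inl j) =
      (U *ᵥ fun s => ((Sum.elim (fun _ => 1) (fun _ => 0) s : ℝ) : ℂ)) (Sum.inl u) := by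
    simp [mulVec, dotProduct, Fintype.sum_sum_type]
  rw [hsum, hsplit, mulVec_sub, mulVec_smul, mulVec_smul,
    transU_mulVec_of_mulVec_eq_smul (joinA_mulVec_eq_smul hAXrow hAYrow hn hp),
    transU_mulVec_of_mulVec_eq_smul (joinA_mulVec_eq_smul hAXrow hAYrow hn hq)]
  simp
  field_simp

end join

theorem stmt3_general (m n : ℕ) (hm : 1 ≤ m) (hn : 1 ≤ n) (k ℓ : ℝ)
    (AX : Matrix (Fin m) (Fin m) ℝ) (AY : Matrix (Fin n) (Fin n) ℝ)
    (hAXsymm : AX.IsSymm) (hAXrow : ∀ i, ∑ j, AX i j = k)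
    (hAYrow : ∀ i, ∑ j, AY i j = ℓ)
    (D lamPlus lamMinus : ℝ)
    (hD : D = (k - ℓ) ^ 2 + 4 * m * n)
    (hPlus : lamPlus = (k + ℓ + Real.sqrt D) / 2)
    (hMinus : lamMinus = (k + ℓ - Real.sqrt D) / 2) :
    ∀ (u v : Fin m) (t : ℝ),
      transU (joinA m n AX AY) t (Sum.inl u) (Sum.inl v) =
        transU AX t u v
          + Complex.exp (Complex.I * (t : ℂ) * (lamPlus : ℂ)) * ((k : ℂ) - (lamMinus : ℂ))
              / ((m : ℂ) * ((Real.sqrt D : ℝ) : ℂ))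
          - Complex.exp (Complex.I * (t : ℂ) * (lamMinus : ℂ)) * ((k : ℂ) - (lamPlus : ℂ))
              / ((m : ℂ) * ((Real.sqrt D : ℝ) : ℂ))
          - Complex.exp (Complex.I * (t : ℂ) * (k : ℂ)) / (m : ℂ) := by
  intro u v t
  have hDpos : 0 < D := by rw [hD]; positivity
  have hsqrt : Real.sqrt D ^ 2 = (k - ℓ) ^ 2 + 4 * m * n := hD ▸ Real.sq_sqrt hDpos.le
  have hPlusRoot : (lamPlus - k) * (lamPlus - ℓ) = m * n := by
    rw [hPlus]; linear_combination hsqrt / 4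
  have hMinusRoot : (lamMinus - k) * (lamMinus - ℓ) = m * n := by
    rw [hMinus]; linear_combination hsqrt / 4
  have hgap : lamPlus - lamMinus = Real.sqrt D := by rw [hPlus, hMinus]; ring
  have hgapC : (lamPlus : ℂ) - lamMinus = (Real.sqrt D : ℝ) := by exact_mod_cast hgap
  rw [transU_joinA_inl_inl hAXsymm hAXrow, sum_transU_apply_of_isSymm hAXsymm hAXrow,
    sum_transU_joinA_inl hAXrow hAYrow (by omega) hPlusRoot hMinusRoot
      (by linarith [Real.sqrt_pos.2 hDpos]), hgapC]
  ring

theorem stmt3 (m n : ℕ) (hm : 1 ≤ m) (hn : 1 ≤ n) (k ℓ : ℝ)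
    (AX : Matrix (Fin m) (Fin m) ℝ) (AY : Matrix (Fin n) (Fin n) ℝ)
    (hAXsymm : AX.IsSymm) (hAXnonneg : ∀ i j, 0 ≤ AX i j) (hAXrow : ∀ i, ∑ j, AX i j = k)
    (hAYsymm : AY.IsSymm) (hAYnonneg : ∀ i j, 0 ≤ AY i j) (hAYrow : ∀ i, ∑ j, AY i j = ℓ)
    (D lamPlus lamMinus : ℝ)
    (hD : D = (k - ℓ) ^ 2 + 4 * m * n)
    (hPlus : lamPlus = (k + ℓ + Real.sqrt D) / 2)
    (hMinus : lamMinus = (k + ℓ - Real.sqrt D) / 2) :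
    ∀ (u v : Fin m) (t : ℝ),
      transU (joinA m n AX AY) t (Sum.inl u) (Sum.inl v) =
        transU AX t u v
          + Complex.exp (Complex.I * (t : ℂ) * (lamPlus : ℂ)) * ((k : ℂ) - (lamMinus : ℂ))
              / ((m : ℂ) * ((Real.sqrt D : ℝ) : ℂ))
          - Complex.exp (Complex.I * (t : ℂ) * (lamMinus : ℂ)) * ((k : ℂ) - (lamPlus : ℂ))
              / ((m : ℂ) * ((Real.sqrt D : ℝ) : ℂ))
          - Complex.exp (Complex.I * (t : ℂ) * (k : ℂ)) / (m : ℂ) :=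
  stmt3_general m n hm hn k ℓ AX AY hAXsymm hAXrow hAYrow D lamPlus lamMinus hD hPlus hMinus
end

section
/- Assume in addition that the kernel of L_X is one-dimensional (X is connected). Then for every u ∈ {1,…,m}, the eigenvalue support satisfies σ_u(L) = {λ + n : λ ∈ σ_u(L_X), λ ≠ 0} ∪ {0, m+n}. -/
open Matrix Complex

/-! Summing the eigenvalue equation `L w = λ w` of the join over each side, and using that the
symmetric Laplacians `L_X`, `L_Y` have zero column sums, the side sums `s`, `t` of `w` satisfy
`n s - m t = λ s` and `m t - n s = λ t`. Hence for `λ ∉ {0, m + n}` both vanish, the `X`-part of `w`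
is an eigenvector of `L_X` for `λ - n`, and `λ - n ≠ 0` because the connectivity of `X` makes the
kernel of `L_X` the constants, whose sum is nonzero. Conversely, eigenvectors of `L_X` with zero
sum extend by zero, and `1` and `(n 1_X, -m 1_Y)` are eigenvectors for `0` and `m + n`. -/

section LaplacianLike

variable {ι K : Type*} [Fintype ι] [Field K] {A : Matrix ι ι K}

theorem Matrix.mulVec_const_eq_zero (hrow : ∀ i, ∑ j, A i j = 0) (c : K) :
    A *ᵥ (fun _ => c) = 0 := by
  funext i
  simp [Matrix.mulVec, dotProduct, ← Finset.sum_mul, hrow i]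

theorem Matrix.sum_mulVec_eq_zero (hA : A.IsSymm) (hrow : ∀ i, ∑ j, A i j = 0) (x : ι → K) :
    ∑ i, (A *ᵥ x) i = 0 := by
  have hones : (fun _ => (1 : K)) ᵥ* A = 0 := by
    rw [← hA.eq, Matrix.vecMul_transpose, Matrix.mulVec_const_eq_zero hrow]
  simpa [dotProduct, hones] using Matrix.dotProduct_mulVec (fun _ => (1 : K)) A x

theorem Matrix.sum_eq_zero_of_mulVec_eq_smul (hA : A.IsSymm) (hrow : ∀ i, ∑ j, A i j = 0)
    {μ : K} (hμ : μ ≠ 0) {x : ι → K} (hx : A *ᵥ x = μ • x) : ∑ i, x i = 0 := by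
  have h := Matrix.sum_mulVec_eq_zero hA hrow x
  rw [hx] at h
  simpa [← Finset.mul_sum, hμ] using h

theorem Matrix.exists_eq_const_of_mulVec_eq_zero [DecidableEq ι] [Nonempty ι]
    (hrow : ∀ i, ∑ j, A i j = 0) (hker : Module.finrank K (LinearMap.ker (Matrix.toLin' A)) = 1)
    {x : ι → K} (hx : A *ᵥ x = 0) : ∃ c : K, x = fun _ => c := by
  let one : LinearMap.ker (Matrix.toLin' A) := ⟨fun _ => 1, Matrix.mulVec_const_eq_zero hrow 1⟩
  have hone : one ≠ 0 := fun h =>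
    one_ne_zero (congrFun (congrArg Subtype.val h) (Classical.arbitrary ι))
  obtain ⟨c, hc⟩ := (finrank_eq_one_iff_of_nonzero' one hone).1 hker ⟨x, hx⟩
  refine ⟨c, funext fun i => ?_⟩
  simpa [one] using (congrFun (congrArg Subtype.val hc) i).symm

theorem Matrix.eq_zero_of_mulVec_eq_zero_of_sum_eq_zero [DecidableEq ι] [Nonempty ι] [CharZero K]
    (hrow : ∀ i, ∑ j, A i j = 0) (hker : Module.finrank K (LinearMap.ker (Matrix.toLin' A)) = 1)
    {x : ι → K} (hx : A *ᵥ x = 0) (hsum : ∑ i, x i = 0) : x = 0 := by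
  obtain ⟨c, rfl⟩ := Matrix.exists_eq_const_of_mulVec_eq_zero hrow hker hx
  have hc : c = 0 := by simpa [Fintype.card_ne_zero] using hsum
  exact funext fun _ => hc

end LaplacianLike

theorem mem_eigSupport_of_mulVec_eq {N : Type*} [Fintype N] {M : Matrix N N ℝ} {lam : ℝ}
    {w : N → ℝ} (hw : M *ᵥ w = lam • w) {u : N} (hu : w u ≠ 0) : lam ∈ eigSupport M u :=
  ⟨w, fun h => hu (congrFun h u), hw, hu⟩

section Join

variable {m n : ℕ} {LX : Matrix (Fin m) (Fin m) ℝ} {LY : Matrix (Fin n) (Fin n) ℝ}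

theorem joinL_mulVec_inl (w : Fin m ⊕ Fin n → ℝ) (i : Fin m) :
    (joinL m n LX LY *ᵥ w) (Sum.inl i) =
      (LX *ᵥ (w ∘ Sum.inl)) i + n * w (Sum.inl i) - ∑ j, w (Sum.inr j) := by
  simp [joinL, Matrix.mulVec, dotProduct, add_mul, Finset.sum_add_distrib, Matrix.one_apply]
  ring

theorem joinL_mulVec_inr (w : Fin m ⊕ Fin n → ℝ) (j : Fin n) :
    (joinL m n LX LY *ᵥ w) (Sum.inr j) =
      (LY *ᵥ (w ∘ Sum.inr)) j + m * w (Sum.inr j) - ∑ i, w (Sum.inl i) := by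
  simp [joinL, Matrix.mulVec, dotProduct, add_mul, Finset.sum_add_distrib, Matrix.one_apply]
  ring

theorem sum_joinL_mulVec_inl (hX : LX.IsSymm) (hXrow : ∀ i, ∑ j, LX i j = 0)
    (w : Fin m ⊕ Fin n → ℝ) :
    ∑ i, (joinL m n LX LY *ᵥ w) (Sum.inl i) =
      n * ∑ i, w (Sum.inl i) - m * ∑ j, w (Sum.inr j) := by
  simp only [joinL_mulVec_inl, Finset.sum_sub_distrib, Finset.sum_add_distrib, ← Finset.mul_sum,
    Matrix.sum_mulVec_eq_zero hX hXrow, Finset.sum_const, Finset.card_univ, Fintype.card_fin,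
    nsmul_eq_mul]
  ring

theorem sum_joinL_mulVec_inr (hY : LY.IsSymm) (hYrow : ∀ i, ∑ j, LY i j = 0)
    (w : Fin m ⊕ Fin n → ℝ) :
    ∑ j, (joinL m n LX LY *ᵥ w) (Sum.inr j) =
      m * ∑ j, w (Sum.inr j) - n * ∑ i, w (Sum.inl i) := by
  simp only [joinL_mulVec_inr, Finset.sum_sub_distrib, Finset.sum_add_distrib, ← Finset.mul_sum,
    Matrix.sum_mulVec_eq_zero hY hYrow, Finset.sum_const, Finset.card_univ, Fintype.card_fin,
    nsmul_eq_mul]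
  ring

theorem sums_eq_zero_of_joinL_mulVec_eq_smul (hX : LX.IsSymm) (hXrow : ∀ i, ∑ j, LX i j = 0)
    (hY : LY.IsSymm) (hYrow : ∀ i, ∑ j, LY i j = 0) {lam : ℝ} (h0 : lam ≠ 0)
    (hmn : lam ≠ m + n) {w : Fin m ⊕ Fin n → ℝ} (hw : joinL m n LX LY *ᵥ w = lam • w) :
    ∑ i, w (Sum.inl i) = 0 ∧ ∑ j, w (Sum.inr j) = 0 := by
  set s := ∑ i, w (Sum.inl i)
  set t := ∑ j, w (Sum.inr j)
  have hs : n * s - m * t = lam * s := by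
    rw [← sum_joinL_mulVec_inl hX hXrow, hw]
    simp [s, Finset.mul_sum]
  have ht : m * t - n * s = lam * t := by
    rw [← sum_joinL_mulVec_inr hY hYrow, hw]
    simp [t, Finset.mul_sum]
  have hst : t = -s := by
    have : lam * (s + t) = 0 := by linarith
    linarith [(mul_eq_zero.1 this).resolve_left h0]
  have : (m + n - lam) * s = 0 := by rw [hst] at hs; linarith
  have hs0 : s = 0 := (mul_eq_zero.1 this).resolve_left (sub_ne_zero.2 (Ne.symm hmn))
  exact ⟨hs0, by rw [hst, hs0, neg_zero]⟩

theorem mulVec_inl_of_joinL_mulVec_eq_smul {lam : ℝ} {w : Fin m ⊕ Fin n → ℝ}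
    (hw : joinL m n LX LY *ᵥ w = lam • w) (ht : ∑ j, w (Sum.inr j) = 0) :
    LX *ᵥ (w ∘ Sum.inl) = (lam - n) • (w ∘ Sum.inl) := by
  funext i
  have h := congrFun hw (Sum.inl i)
  rw [joinL_mulVec_inl, ht] at h
  simp only [Pi.smul_apply, smul_eq_mul, Function.comp_apply] at h ⊢
  linarith

theorem joinL_mulVec_sumElim_zero {μ : ℝ} {x : Fin m → ℝ} (hx : LX *ᵥ x = μ • x)
    (hsum : ∑ i, x i = 0) :
    joinL m n LX LY *ᵥ Sum.elim x 0 = (μ + n) • Sum.elim x 0 := by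
  funext i
  rcases i with i | j
  · simp [joinL_mulVec_inl, hx]
    ring
  · simp [joinL_mulVec_inr, hsum]

theorem joinL_mulVec_const (hXrow : ∀ i, ∑ j, LX i j = 0) (hYrow : ∀ i, ∑ j, LY i j = 0)
    (c : ℝ) : joinL m n LX LY *ᵥ (fun _ => c) = 0 := by
  funext i
  cases i <;> simp [joinL_mulVec_inl, joinL_mulVec_inr, Function.comp_def,
    Matrix.mulVec_const_eq_zero hXrow, Matrix.mulVec_const_eq_zero hYrow]

theorem joinL_mulVec_sumElim_const (hXrow : ∀ i, ∑ j, LX i j = 0)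
    (hYrow : ∀ i, ∑ j, LY i j = 0) :
    joinL m n LX LY *ᵥ Sum.elim (fun _ => (n : ℝ)) (fun _ => -(m : ℝ)) =
      (m + n : ℝ) • Sum.elim (fun _ => (n : ℝ)) (fun _ => -(m : ℝ)) := by
  funext i
  cases i <;> simp [joinL_mulVec_inl, joinL_mulVec_inr, Function.comp_def,
    Matrix.mulVec_const_eq_zero hXrow, Matrix.mulVec_const_eq_zero hYrow] <;> ring

end Join

theorem stmt4_general (m n : ℕ) (hn : 1 ≤ n)
    (LX : Matrix (Fin m) (Fin m) ℝ) (LY : Matrix (Fin n) (Fin n) ℝ)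
    (hLXsymm : LX.IsSymm) (hLXrow : ∀ i, ∑ j, LX i j = 0)
    (hLYsymm : LY.IsSymm) (hLYrow : ∀ i, ∑ j, LY i j = 0)
    (hconn : Module.finrank ℝ (LinearMap.ker (Matrix.toLin' LX)) = 1) :
    ∀ u : Fin m,
      eigSupport (joinL m n LX LY) (Sum.inl u) =
        ((fun lam => lam + (n : ℝ)) '' (eigSupport LX u \ {0})) ∪ {0, (m : ℝ) + (n : ℝ)} := by
  intro u
  have : Nonempty (Fin m) := ⟨u⟩
  ext lam
  constructor
  · rintro ⟨w, -, hw, hwu⟩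
    by_cases h0 : lam = 0
    · exact Or.inr (Or.inl h0)
    by_cases hmn : lam = m + n
    · exact Or.inr (Or.inr hmn)
    obtain ⟨hs, ht⟩ := sums_eq_zero_of_joinL_mulVec_eq_smul hLXsymm hLXrow hLYsymm hLYrow h0 hmn hw
    have hX := mulVec_inl_of_joinL_mulVec_eq_smul hw ht
    have hne : lam - n ≠ 0 := fun h => hwu <| congrFun
      (Matrix.eq_zero_of_mulVec_eq_zero_of_sum_eq_zero hLXrow hconn (by rwa [h, zero_smul] at hX) hs) u
    exact Or.inl ⟨lam - n, ⟨mem_eigSupport_of_mulVec_eq hX hwu, hne⟩, sub_add_cancel _ _⟩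
  · rintro (⟨μ, ⟨⟨x, -, hx, hxu⟩, hμ⟩, rfl⟩ | rfl | rfl)
    · exact mem_eigSupport_of_mulVec_eq (joinL_mulVec_sumElim_zero hx
        (Matrix.sum_eq_zero_of_mulVec_eq_smul hLXsymm hLXrow hμ hx)) hxu
    · exact mem_eigSupport_of_mulVec_eq
        (by rw [zero_smul]; exact joinL_mulVec_const hLXrow hLYrow 1) one_ne_zero
    · exact mem_eigSupport_of_mulVec_eq (joinL_mulVec_sumElim_const hLXrow hLYrow)
        (Nat.cast_pos.2 hn).ne'

theorem stmt4 (m n : ℕ) (hm : 1 ≤ m) (hn : 1 ≤ n)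
    (LX : Matrix (Fin m) (Fin m) ℝ) (LY : Matrix (Fin n) (Fin n) ℝ)
    (hLXsymm : LX.IsSymm) (hLXrow : ∀ i, ∑ j, LX i j = 0)
    (hLYsymm : LY.IsSymm) (hLYrow : ∀ i, ∑ j, LY i j = 0)
    (hconn : Module.finrank ℝ (LinearMap.ker (Matrix.toLin' LX)) = 1) :
    ∀ u : Fin m,
      eigSupport (joinL m n LX LY) (Sum.inl u) =
        ((fun lam => lam + (n : ℝ)) '' (eigSupport LX u \ {0})) ∪ {0, (m : ℝ) + (n : ℝ)} :=
  stmt4_general m n hn LX LY hLXsymm hLXrow hLYsymm hLYrow hconn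
end

section
/- Assume k, ℓ, and √D are all rational. Then for u ∈ {1,…,m}, the vertex u is periodic with respect to A (i.e., |exp(iτA)_{u,u}| = 1 for some τ > 0) if and only if every element of σ_u(A_X) is rational. -/
open Matrix Complex

/-!
Diagonalise the real symmetric matrix `M` by an orthonormal eigenbasis `b_j`. Then
`exp(iτM)_{uu} = ∑_j (b_j u)² e^{iτλ_j}` is a convex combination of unit complex numbers, so it
has modulus one only if all phases `e^{iτλ}` with `λ ∈ σ_u(M)` agree; conversely a common
denominator `d` of a rational `σ_u(M)` makes `τ = 2πd` a period.

For the join, split an eigenvector at `u` into its parts `x` on `X` and `y` on `Y`. If `∑ y = 0`,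
then `x` is an eigenvector of `A_X`; otherwise summing the eigenvalue equations shows that the
eigenvalue is a root `θ₊` or `θ₋ = (k + ℓ ± √D) / 2` of `(θ - k)(θ - ℓ) = mn`. Both roots lie in
`σ_u(A)` (with eigenvectors constant on `X` and on `Y`), and so does every `λ ≠ k` in `σ_u(A_X)`,
extended by zero, since its eigenvectors are orthogonal to the all-ones vector. If `u` is periodic,
`λ - θ₊` is therefore a rational multiple of `θ₊ - θ₋ = √D`, which makes `λ` rational.
-/

lemma eq_sum_smul_of_norm_sum_smul_eq_one {ι E : Type*} [NormedAddCommGroup E]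
    [InnerProductSpace ℝ E] {s : Finset ι} {p : ι → ℝ} {g : ι → E}
    (hp : ∀ i ∈ s, 0 ≤ p i) (hp1 : ∑ i ∈ s, p i = 1) (hg : ∀ i ∈ s, ‖g i‖ ≤ 1)
    (hS : ‖∑ i ∈ s, p i • g i‖ = 1) {j : ι} (hj : j ∈ s) (hpj : p j ≠ 0) :
    g j = ∑ i ∈ s, p i • g i := by
  set S := ∑ i ∈ s, p i • g i
  have hcross : ∑ i ∈ s, p i * inner ℝ (g i) S = ‖S‖ ^ 2 := by
    simp_rw [← real_inner_self_eq_norm_sq, S, sum_inner, real_inner_smul_left]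
  have hvar : ∑ i ∈ s, p i * ‖g i - S‖ ^ 2 = ∑ i ∈ s, p i * ‖g i‖ ^ 2 - ‖S‖ ^ 2 := by
    simp_rw [norm_sub_sq_real, mul_add, mul_sub, Finset.sum_add_distrib, Finset.sum_sub_distrib,
      ← Finset.sum_mul, hp1, mul_left_comm _ (2 : ℝ), ← Finset.mul_sum, hcross]
    ring
  have hle : ∑ i ∈ s, p i * ‖g i‖ ^ 2 ≤ ∑ i ∈ s, p i := by
    refine Finset.sum_le_sum fun i hi => mul_le_of_le_one_right (hp i hi) ?_
    exact pow_le_one₀ (norm_nonneg _) (hg i hi)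
  have hzero : ∑ i ∈ s, p i * ‖g i - S‖ ^ 2 = 0 := by
    refine le_antisymm ?_ (Finset.sum_nonneg fun i hi => by have := hp i hi; positivity)
    rw [hvar, hS]
    linarith
  have hterm := (Finset.sum_eq_zero_iff_of_nonneg fun i hi => by
    have := hp i hi; positivity).mp hzero j hj
  simpa [hpj, sub_eq_zero] using hterm

lemma exists_int_of_cexp_eq {τ a b : ℝ} (h : Complex.exp (I * τ * a) = Complex.exp (I * τ * b)) :
    ∃ z : ℤ, τ * (a - b) = 2 * Real.pi * z := by
  obtain ⟨z, hz⟩ := Complex.exp_eq_exp_iff_exists_int.mp h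
  refine ⟨z, ?_⟩
  have hC : ((τ * (a - b) : ℝ) : ℂ) = ((2 * Real.pi * z : ℝ) : ℂ) := by
    apply mul_right_cancel₀ I_ne_zero
    push_cast
    linear_combination hz
  exact_mod_cast hC

lemma exists_rat_sub_eq_mul_sub_of_cexp_eq {τ a b c d : ℝ} (hτ : τ ≠ 0) (hcd : c ≠ d)
    (hab : Complex.exp (I * τ * a) = Complex.exp (I * τ * b))
    (hcd' : Complex.exp (I * τ * c) = Complex.exp (I * τ * d)) :
    ∃ q : ℚ, a - b = q * (c - d) := by
  obtain ⟨z, hz⟩ := exists_int_of_cexp_eq hab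
  obtain ⟨z', hz'⟩ := exists_int_of_cexp_eq hcd'
  have hz'0 : (z' : ℝ) ≠ 0 := by
    rintro h0
    rw [h0, mul_zero, mul_eq_zero] at hz'
    exact hz'.elim hτ (sub_ne_zero.mpr hcd)
  refine ⟨z / z', ?_⟩
  push_cast
  field_simp
  apply mul_left_cancel₀ hτ
  linear_combination (z' : ℝ) * hz - (z : ℝ) * hz'

lemma exists_pos_nat_forall_mul_eq_int {ι : Type*} (s : Finset ι) (x : ι → ℝ)
    (hx : ∀ i ∈ s, ∃ q : ℚ, x i = q) : ∃ d : ℕ, 0 < d ∧ ∀ i ∈ s, ∃ z : ℤ, x i * d = z := by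
  choose! q hq using hx
  refine ⟨∏ i ∈ s, (q i).den, Finset.prod_pos fun i _ => (q i).den_pos, fun i hi => ?_⟩
  obtain ⟨c, hc⟩ := Finset.dvd_prod_of_mem (fun i => (q i).den) hi
  refine ⟨(q i).num * c, ?_⟩
  rw [hc, hq i hi, Nat.cast_mul, ← mul_assoc]
  push_cast
  rw [← Rat.cast_natCast, ← Rat.cast_mul, Rat.mul_den_eq_num, Rat.cast_intCast]

lemma sub_mul_sub_eq_iff {a b c D θ : ℝ} (hD : D = (a - b) ^ 2 + 4 * c) (hD0 : 0 ≤ D) :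
    (θ - a) * (θ - b) = c ↔ θ = (a + b + √D) / 2 ∨ θ = (a + b - √D) / 2 := by
  have hs : √D ^ 2 = D := Real.sq_sqrt hD0
  have hsq : (θ - a) * (θ - b) = c ↔ (2 * θ - (a + b)) ^ 2 = √D ^ 2 :=
    ⟨fun h => by linear_combination 4 * h - hD - hs,
      fun h => by linear_combination (h + hD + hs) / 4⟩
  rw [hsq, sq_eq_sq_iff_eq_or_eq_neg]
  exact or_congr ⟨fun h => by linarith, fun h => by linarith⟩
    ⟨fun h => by linarith, fun h => by linarith⟩

section Spectral

variable {V : Type*} [Fintype V] [DecidableEq V] {M : Matrix V V ℝ}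

lemma Matrix.IsHermitian.transU_apply_self (hM : M.IsHermitian) (t : ℝ) (u : V) :
    transU M t u u =
      ∑ j, (hM.eigenvectorBasis j u ^ 2) • Complex.exp (I * t * hM.eigenvalues j) := by
  set U : Matrix V V ℝ := (hM.eigenvectorUnitary : Matrix V V ℝ)
  set P : Matrix V V ℂ := U.map Complex.ofRealHom
  set Q : Matrix V V ℂ := (star U).map Complex.ofRealHom
  have hUU : U * star U = 1 := Matrix.mem_unitaryGroup_iff.mp hM.eigenvectorUnitary.2
  have hPQ : P * Q = 1 := by rw [← Matrix.map_mul, hUU, Matrix.map_one] <;> simp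
  have hQ : Q = P⁻¹ := (Matrix.inv_eq_right_inv hPQ).symm
  have hP : IsUnit P := (Matrix.isUnit_iff_isUnit_det P).mpr (isUnit_det_of_right_inverse hPQ)
  have hM' : M.map Complex.ofRealHom = P * diagonal (fun j => (hM.eigenvalues j : ℂ)) * Q := by
    conv_lhs => rw [hM.spectral_theorem, Unitary.conjStarAlgAut_apply]
    rw [Matrix.map_mul, Matrix.map_mul, diagonal_map (map_zero _)]
    simp [P, Q, U, RCLike.ofReal_real_eq_id]
  have hconj : (I * (t : ℂ)) • M.map Complex.ofRealHom =
      P * diagonal (fun j => I * t * hM.eigenvalues j) * P⁻¹ := by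
    rw [hM', hQ, ← Matrix.smul_mul, ← Matrix.mul_smul, ← diagonal_smul]
    rfl
  rw [transU, show (fun x : ℝ => (x : ℂ)) = ⇑Complex.ofRealHom from rfl, hconj,
    Matrix.exp_conj _ _ hP, Matrix.exp_diagonal, ← hQ, Matrix.mul_apply]
  refine Finset.sum_congr rfl fun j _ => ?_
  simp only [mul_diagonal, map_apply, eigenvectorUnitary_apply, ofRealHom_eq_coe, Pi.coe_exp,
    ← exp_eq_exp_ℂ, star_apply, star_trivial, real_smul, ofReal_pow, P, U, Q]
  ring

lemma Matrix.IsHermitian.sum_eigenvectorBasis_sq (hM : M.IsHermitian) (u : V) :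
    ∑ j, hM.eigenvectorBasis j u ^ 2 = 1 := by
  have hUU := congrFun (congrFun (Unitary.coe_mul_star_self hM.eigenvectorUnitary) u) u
  simpa [Matrix.mul_apply, sq] using hUU

lemma Matrix.IsHermitian.mem_eigSupport_iff (hM : M.IsHermitian) (u : V) (lam : ℝ) :
    lam ∈ eigSupport M u ↔ ∃ j, hM.eigenvalues j = lam ∧ hM.eigenvectorBasis j u ≠ 0 := by
  constructor
  · rintro ⟨w, -, hw, hwu⟩
    by_contra! hzero
    set U : Matrix V V ℝ := (hM.eigenvectorUnitary : Matrix V V ℝ)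
    have hUU : U * star U = 1 := Matrix.mem_unitaryGroup_iff.mp hM.eigenvectorUnitary.2
    have hsymm : Mᵀ = M := (isHermitian_iff_isSymm.mp hM).eq
    have hcoeff : ∀ j, hM.eigenvalues j ≠ lam → ⇑(hM.eigenvectorBasis j) ⬝ᵥ w = 0 := by
      intro j hj
      have h := dotProduct_transpose_mulVec M w (hM.eigenvectorBasis j)
      rw [hsymm, hw, hM.mulVec_eigenvectorBasis, dotProduct_smul, dotProduct_smul,
        dotProduct_comm w, smul_eq_mul, smul_eq_mul] at h
      exact (mul_eq_mul_right_iff.mp h).resolve_left hj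
    have hexp : w = U *ᵥ (star U *ᵥ w) := by rw [mulVec_mulVec, hUU, one_mulVec]
    apply hwu
    rw [hexp, mulVec, dotProduct]
    refine Finset.sum_eq_zero fun j _ => ?_
    by_cases hj : hM.eigenvalues j = lam
    · simp [U, hzero j hj]
    · have hc : (star U *ᵥ w) j = ⇑(hM.eigenvectorBasis j) ⬝ᵥ w := by
        simp [U, mulVec, dotProduct]
      rw [hc, hcoeff j hj, mul_zero]
  · rintro ⟨j, rfl, hj⟩
    exact ⟨hM.eigenvectorBasis j, fun h => hj (by simp [h]), hM.mulVec_eigenvectorBasis j, hj⟩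

lemma Matrix.IsHermitian.exists_cexp_eq_of_periodicAt (hM : M.IsHermitian) {u : V}
    (hper : PeriodicAt M u) : ∃ τ : ℝ, 0 < τ ∧ ∀ lam ∈ eigSupport M u, ∀ mu ∈ eigSupport M u,
      Complex.exp (I * τ * lam) = Complex.exp (I * τ * mu) := by
  obtain ⟨τ, hτ, hnorm⟩ := hper
  rw [hM.transU_apply_self] at hnorm
  have hphase : ∀ j, hM.eigenvectorBasis j u ≠ 0 →
      Complex.exp (I * τ * hM.eigenvalues j) = transU M τ u u := by
    intro j hj
    rw [hM.transU_apply_self]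
    refine eq_sum_smul_of_norm_sum_smul_eq_one (fun i _ => sq_nonneg _)
      (hM.sum_eigenvectorBasis_sq u) (fun i _ => ?_) hnorm (Finset.mem_univ j) (pow_ne_zero 2 hj)
    simp [Complex.norm_exp]
  refine ⟨τ, hτ, fun lam hlam mu hmu => ?_⟩
  obtain ⟨j, rfl, hj⟩ := (hM.mem_eigSupport_iff u lam).mp hlam
  obtain ⟨j', rfl, hj'⟩ := (hM.mem_eigSupport_iff u mu).mp hmu
  exact (hphase j hj).trans (hphase j' hj').symm

lemma Matrix.IsHermitian.periodicAt_of_forall_mem_eigSupport_rat (hM : M.IsHermitian) {u : V}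
    (hrat : ∀ lam ∈ eigSupport M u, ∃ q : ℚ, lam = q) : PeriodicAt M u := by
  obtain ⟨d, hd, hint⟩ := exists_pos_nat_forall_mul_eq_int {j | hM.eigenvectorBasis j u ≠ 0}
    hM.eigenvalues fun j hj => hrat _ <|
      (hM.mem_eigSupport_iff u _).mpr ⟨j, rfl, (Finset.mem_filter.mp hj).2⟩
  refine ⟨2 * Real.pi * d, by positivity, ?_⟩
  have hterm : ∀ j, (hM.eigenvectorBasis j u ^ 2) •
      Complex.exp (I * (2 * Real.pi * d : ℝ) * hM.eigenvalues j) =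
        ((hM.eigenvectorBasis j u ^ 2 : ℝ) : ℂ) := by
    intro j
    by_cases hj : hM.eigenvectorBasis j u = 0
    · simp [hj]
    obtain ⟨z, hz⟩ := hint j (by simpa using hj)
    have hzC : ((hM.eigenvalues j * d : ℝ) : ℂ) = z := by exact_mod_cast congrArg ofReal hz
    rw [show I * (2 * Real.pi * d : ℝ) * hM.eigenvalues j = z * (2 * Real.pi * I) by
        push_cast at hzC ⊢; linear_combination (2 * Real.pi * I) * hzC,
      Complex.exp_int_mul_two_pi_mul_I, Complex.real_smul, mul_one]
  rw [hM.transU_apply_self, Finset.sum_congr rfl fun j _ => hterm j, ← Complex.ofReal_sum,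
    hM.sum_eigenvectorBasis_sq, Complex.ofReal_one, norm_one]

end Spectral

section RowSum

variable {ι R : Type*} [Fintype ι] [CommSemiring R] {A : Matrix ι ι R} {k : R}

lemma mulVec_const_of_row_sum (hrow : ∀ i, ∑ j, A i j = k) (c : R) :
    A *ᵥ (fun _ => c) = fun _ => k * c := by
  funext i
  simp [mulVec, dotProduct, ← Finset.sum_mul, hrow]

lemma sum_mulVec_of_row_sum (hA : A.IsSymm) (hrow : ∀ i, ∑ j, A i j = k) (x : ι → R) :
    ∑ i, (A *ᵥ x) i = k * ∑ i, x i := by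
  have h := dotProduct_transpose_mulVec A x (fun _ => 1)
  rw [hA.eq, mulVec_const_of_row_sum hrow] at h
  simpa [dotProduct, Finset.mul_sum, mul_comm] using h.symm

end RowSum

section Join

variable {m n : ℕ} {k ℓ : ℝ} {AX : Matrix (Fin m) (Fin m) ℝ} {AY : Matrix (Fin n) (Fin n) ℝ}

lemma joinA_isSymm (hX : AX.IsSymm) (hY : AY.IsSymm) : (joinA m n AX AY).IsSymm :=
  IsSymm.fromBlocks hX (by ext; rfl) hY

lemma joinA_mulVec_elim (x : Fin m → ℝ) (y : Fin n → ℝ) :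
    joinA m n AX AY *ᵥ Sum.elim x y =
      Sum.elim (AX *ᵥ x + fun _ => ∑ j, y j) (AY *ᵥ y + fun _ => ∑ i, x i) := by
  rw [joinA, fromBlocks_mulVec]
  congr 1 <;> funext i <;> simp [mulVec, dotProduct, add_comm]

lemma mem_eigSupport_joinA_inl_iff {u : Fin m} {lam : ℝ} :
    lam ∈ eigSupport (joinA m n AX AY) (Sum.inl u) ↔
      ∃ x y, AX *ᵥ x + (fun _ => ∑ j, y j) = lam • x ∧
        AY *ᵥ y + (fun _ => ∑ i, x i) = lam • y ∧ x u ≠ 0 := by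
  constructor
  · rintro ⟨w, -, hw, hwu⟩
    rw [← Sum.elim_comp_inl_inr w, joinA_mulVec_elim] at hw
    exact ⟨w ∘ Sum.inl, w ∘ Sum.inr, funext fun i => by simpa using congrFun hw (Sum.inl i),
      funext fun i => by simpa using congrFun hw (Sum.inr i), hwu⟩
  · rintro ⟨x, y, hx, hy, hxu⟩
    refine ⟨Sum.elim x y, fun h => hxu (congrFun h (Sum.inl u)), ?_, hxu⟩
    rw [joinA_mulVec_elim, hx, hy]
    funext i
    cases i <;> rfl

lemma mem_eigSupport_or_of_mem_eigSupport_joinA_inl (hX : AX.IsSymm)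
    (hXrow : ∀ i, ∑ j, AX i j = k) (hY : AY.IsSymm) (hYrow : ∀ i, ∑ j, AY i j = ℓ) {u : Fin m}
    {lam : ℝ} (h : lam ∈ eigSupport (joinA m n AX AY) (Sum.inl u)) :
    lam ∈ eigSupport AX u ∨ (lam - k) * (lam - ℓ) = m * n := by
  obtain ⟨x, y, hx, hy, hxu⟩ := mem_eigSupport_joinA_inl_iff.mp h
  have hsumX : k * ∑ i, x i + m * ∑ j, y j = lam * ∑ i, x i := by
    simpa [Finset.sum_add_distrib, sum_mulVec_of_row_sum hX hXrow, Finset.mul_sum]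
      using congrArg (fun v => ∑ i, v i) hx
  have hsumY : ℓ * ∑ j, y j + n * ∑ i, x i = lam * ∑ j, y j := by
    simpa [Finset.sum_add_distrib, sum_mulVec_of_row_sum hY hYrow, Finset.mul_sum]
      using congrArg (fun v => ∑ i, v i) hy
  by_cases hy0 : ∑ j, y j = 0
  · left
    exact ⟨x, fun h => hxu (congrFun h u), by simpa [hy0, ← Pi.zero_def] using hx, hxu⟩
  · right
    apply mul_right_cancel₀ hy0
    linear_combination (-(lam - k)) * hsumY - (n : ℝ) * hsumX

lemma mem_eigSupport_joinA_inl_of_root (hn : n ≠ 0) (hXrow : ∀ i, ∑ j, AX i j = k)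
    (hYrow : ∀ i, ∑ j, AY i j = ℓ) (u : Fin m) {θ : ℝ} (hθ : (θ - k) * (θ - ℓ) = m * n) :
    θ ∈ eigSupport (joinA m n AX AY) (Sum.inl u) := by
  refine mem_eigSupport_joinA_inl_iff.mpr ⟨fun _ => n, fun _ => θ - k, ?_, ?_, by simpa⟩ <;>
    funext i <;>
    simp only [mulVec_const_of_row_sum hXrow, mulVec_const_of_row_sum hYrow, Pi.add_apply,
      Pi.smul_apply, smul_eq_mul, Finset.sum_const, Finset.card_fin, nsmul_eq_mul]
  · ring
  · linear_combination -hθ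

lemma mem_eigSupport_joinA_inl_of_mem (hX : AX.IsSymm) (hXrow : ∀ i, ∑ j, AX i j = k)
    {u : Fin m} {lam : ℝ} (hlam : lam ∈ eigSupport AX u) (hne : lam ≠ k) :
    lam ∈ eigSupport (joinA m n AX AY) (Sum.inl u) := by
  obtain ⟨x, -, hx, hxu⟩ := hlam
  have hsum : ∑ i, x i = 0 := by
    have h := sum_mulVec_of_row_sum hX hXrow x
    rw [hx] at h
    simp only [Pi.smul_apply, smul_eq_mul, ← Finset.mul_sum] at h
    exact (mul_eq_mul_right_iff.mp h).resolve_left hne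
  exact mem_eigSupport_joinA_inl_iff.mpr
    ⟨x, 0, by simpa [← Pi.zero_def] using hx, by simp [hsum, ← Pi.zero_def], hxu⟩

end Join

theorem stmt6_general (m n : ℕ) (hn : 1 ≤ n) (k ℓ : ℝ)
    (AX : Matrix (Fin m) (Fin m) ℝ) (AY : Matrix (Fin n) (Fin n) ℝ)
    (hAXsymm : AX.IsSymm) (hAXrow : ∀ i, ∑ j, AX i j = k)
    (hAYsymm : AY.IsSymm) (hAYrow : ∀ i, ∑ j, AY i j = ℓ)
    (D : ℝ) (hD : D = (k - ℓ) ^ 2 + 4 * m * n)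
    (hk : ∃ q : ℚ, k = (q : ℝ)) (hℓ : ∃ q : ℚ, ℓ = (q : ℝ))
    (hsqrtD : ∃ q : ℚ, Real.sqrt D = (q : ℝ)) (u : Fin m) :
    PeriodicAt (joinA m n AX AY) (Sum.inl u) ↔
      ∀ lam ∈ eigSupport AX u, ∃ q : ℚ, lam = (q : ℝ) := by
  obtain ⟨qk, rfl⟩ := hk
  obtain ⟨qℓ, rfl⟩ := hℓ
  obtain ⟨qD, hqD⟩ := hsqrtD
  have hA : (joinA m n AX AY).IsHermitian :=
    isHermitian_iff_isSymm.mpr (joinA_isSymm hAXsymm hAYsymm)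
  have hDpos : 0 < D := by
    have : (0 : ℝ) < m := Nat.cast_pos.mpr u.pos
    rw [hD]
    positivity
  have hqD0 : (0 : ℝ) < qD := hqD ▸ Real.sqrt_pos.mpr hDpos
  have hroot (θ : ℝ) : (θ - qk) * (θ - qℓ) = m * n ↔
      θ = (qk + qℓ + qD) / 2 ∨ θ = (qk + qℓ - qD) / 2 :=
    hqD ▸ sub_mul_sub_eq_iff (by rw [hD]; ring) hDpos.le
  have hmem (θ : ℝ) (hθ : (θ - qk) * (θ - qℓ) = m * n) :=
    mem_eigSupport_joinA_inl_of_root (AX := AX) (AY := AY) (by omega) hAXrow hAYrow u hθ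
  constructor
  · intro hper lam hlam
    obtain ⟨τ, hτ, hphase⟩ := hA.exists_cexp_eq_of_periodicAt hper
    by_cases hlk : lam = qk
    · exact ⟨qk, hlk⟩
    have hplus := hmem _ ((hroot _).mpr (.inl rfl))
    obtain ⟨q, hq⟩ := exists_rat_sub_eq_mul_sub_of_cexp_eq hτ.ne' (by linarith)
      (hphase _ (mem_eigSupport_joinA_inl_of_mem hAXsymm hAXrow hlam hlk) _ hplus)
      (hphase _ hplus _ (hmem _ ((hroot _).mpr (.inr rfl))))
    exact ⟨(qk + qℓ + qD) / 2 + q * qD, by push_cast; linear_combination hq⟩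
  · intro hrat
    refine hA.periodicAt_of_forall_mem_eigSupport_rat fun lam hlam => ?_
    rcases mem_eigSupport_or_of_mem_eigSupport_joinA_inl hAXsymm hAXrow hAYsymm hAYrow hlam
      with hX | hquad
    · exact hrat lam hX
    · rcases (hroot lam).mp hquad with rfl | rfl
      exacts [⟨(qk + qℓ + qD) / 2, by push_cast; ring⟩, ⟨(qk + qℓ - qD) / 2, by push_cast; ring⟩]

theorem stmt6 (m n : ℕ) (hm : 1 ≤ m) (hn : 1 ≤ n) (k ℓ : ℝ)
    (AX : Matrix (Fin m) (Fin m) ℝ) (AY : Matrix (Fin n) (Fin n) ℝ)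
    (hAXsymm : AX.IsSymm) (hAXnonneg : ∀ i j, 0 ≤ AX i j) (hAXrow : ∀ i, ∑ j, AX i j = k)
    (hAYsymm : AY.IsSymm) (hAYnonneg : ∀ i j, 0 ≤ AY i j) (hAYrow : ∀ i, ∑ j, AY i j = ℓ)
    (D : ℝ) (hD : D = (k - ℓ) ^ 2 + 4 * m * n)
    (hk : ∃ q : ℚ, k = (q : ℝ)) (hℓ : ∃ q : ℚ, ℓ = (q : ℝ))
    (hsqrtD : ∃ q : ℚ, Real.sqrt D = (q : ℝ)) (u : Fin m) :
    PeriodicAt (joinA m n AX AY) (Sum.inl u) ↔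
      ∀ lam ∈ eigSupport AX u, ∃ q : ℚ, lam = (q : ℝ) :=
  stmt6_general m n hn k ℓ AX AY hAXsymm hAXrow hAYsymm hAYrow D hD hk hℓ hsqrtD u
end

section
/- If every eigenvalue of L_X is an integer but some eigenvalue of L_Y is not an integer, then some eigenvalue of L is not an integer, and nevertheless every vertex u ∈ {1,…,m} is periodic with respect to L. -/
open Matrix Complex

/-!
Every Laplacian kills the all-ones vector, so by symmetry an eigenvector of `L_Y` with eigenvalue
`μ ≠ 0` has entry sum zero; extended by zero on `X` it is an eigenvector of `L` with eigenvalue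
`μ + m`, which is not an integer.

For periodicity at `u ∈ X` take `τ = 2π`: `exp(2πiL)` fixes every eigenvector of `L` with integer
eigenvalue, so it suffices that `e_u` lies in their span. An eigenvector of `L_X` (eigenvalue
`k ∈ ℤ`) minus its mean is again one, with entry sum zero, and extended by zero it is an eigenvector
of `L` with eigenvalue `k + n`. The leftover indicator vector of `X` is a combination of the
all-ones vector (eigenvalue `0`) and `(n·1, -m·1)` (eigenvalue `m + n`).
-/

section Periodicity

variable {N : Type*} [Fintype N] [DecidableEq N]

open scoped Norms.Operator in
theorem Matrix.exp_mulVec_of_mulVec_eq_smul_s9 {𝕂 : Type*} [RCLike 𝕂] {A : Matrix N N 𝕂}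
    {v : N → 𝕂} {μ : 𝕂} (h : A *ᵥ v = μ • v) :
    NormedSpace.exp A *ᵥ v = NormedSpace.exp μ • v := by
  have hpow (k : ℕ) : A ^ k *ᵥ v = μ ^ k • v := by
    induction k with
    | zero => simp
    | succ k ih => rw [pow_succ', ← mulVec_mulVec, ih, mulVec_smul, h, smul_smul, pow_succ]
  have hA := (NormedSpace.exp_series_hasSum_exp' (𝕂 := 𝕂) A).map
    (mulVec.addMonoidHomLeft v) (continuous_id.matrix_mulVec continuous_const)
  have hμ := (NormedSpace.exp_series_hasSum_exp' (𝕂 := 𝕂) μ).smul_const v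
  refine hA.unique ?_
  simpa [Function.comp_def, mulVec.addMonoidHomLeft, smul_mulVec, hpow, smul_smul] using hμ

theorem transU_two_pi_mulVec_of_mulVec_eq_intCast_smul {M : Matrix N N ℝ} {w : N → ℝ} {k : ℤ}
    (h : M *ᵥ w = (k : ℝ) • w) :
    transU M (2 * Real.pi) *ᵥ (Complex.ofReal ∘ w) = Complex.ofReal ∘ w := by
  have hC : M.map Complex.ofReal *ᵥ (Complex.ofReal ∘ w) = (k : ℂ) • (Complex.ofReal ∘ w) := by
    funext i
    have hi := congrFun h i
    simp only [mulVec, dotProduct, Pi.smul_apply, smul_eq_mul, map_apply,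
      Function.comp_apply] at hi ⊢
    exact_mod_cast hi
  have hexp : Complex.exp (Complex.I * (2 * Real.pi : ℝ) * k) = 1 := by
    rw [← Complex.exp_int_mul_two_pi_mul_I k]
    push_cast
    ring_nf
  rw [transU, Matrix.exp_mulVec_of_mulVec_eq_smul_s9 (by rw [smul_mulVec, hC, smul_smul]),
    ← Complex.exp_eq_exp_ℂ, hexp, one_smul]

def intEigenvectorSpan (M : Matrix N N ℝ) : Submodule ℝ (N → ℝ) :=
  Submodule.span ℝ {w | ∃ k : ℤ, M *ᵥ w = (k : ℝ) • w}

theorem transU_two_pi_mulVec_of_mem_intEigenvectorSpan {M : Matrix N N ℝ} {v : N → ℝ}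
    (hv : v ∈ intEigenvectorSpan M) :
    transU M (2 * Real.pi) *ᵥ (Complex.ofReal ∘ v) = Complex.ofReal ∘ v := by
  induction hv using Submodule.span_induction with
  | mem w hw =>
    obtain ⟨k, hk⟩ := hw
    exact transU_two_pi_mulVec_of_mulVec_eq_intCast_smul hk
  | zero => funext i; simp
  | add x y _ _ hx hy =>
    have hxy : Complex.ofReal ∘ (x + y) = Complex.ofReal ∘ x + Complex.ofReal ∘ y := by
      funext i; simp
    rw [hxy, mulVec_add, hx, hy]
  | smul a x _ hx =>
    have hax : Complex.ofReal ∘ (a • x) = (a : ℂ) • (Complex.ofReal ∘ x) := by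
      funext i; simp
    rw [hax, mulVec_smul, hx]

theorem periodicAt_of_single_mem_intEigenvectorSpan {M : Matrix N N ℝ} {u : N}
    (hu : Pi.single u 1 ∈ intEigenvectorSpan M) : PeriodicAt M u := by
  refine ⟨2 * Real.pi, Real.two_pi_pos, ?_⟩
  have hfix := congrFun (transU_two_pi_mulVec_of_mem_intEigenvectorSpan hu) u
  have hsingle : Complex.ofReal ∘ Pi.single u (1 : ℝ) = Pi.single u 1 := by
    funext i; by_cases hi : i = u <;> simp [hi]
  rw [hsingle, mulVec_single_one, col_apply, Pi.single_eq_same] at hfix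
  simp [hfix]

theorem Matrix.IsHermitian.intEigenvectorSpan_eq_top {A : Matrix N N ℝ} (hA : A.IsHermitian)
    (hint : ∀ lam : ℝ, IsEigenvalue A lam → ∃ z : ℤ, lam = z) : intEigenvectorSpan A = ⊤ := by
  let b := hA.eigenvectorBasis.toBasis.map (WithLp.linearEquiv 2 ℝ (N → ℝ))
  have hb (i : N) : A *ᵥ b i = hA.eigenvalues i • b i := hA.mulVec_eigenvectorBasis i
  rw [eq_top_iff, ← b.span_eq, Submodule.span_le, Set.range_subset_iff]
  intro i
  obtain ⟨z, hz⟩ := hint _ ⟨b i, b.ne_zero i, hb i⟩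
  exact Submodule.subset_span ⟨z, hz ▸ hb i⟩

end Periodicity

theorem Matrix.mulVec_one_eq_zero {α N N' : Type*} [NonAssocSemiring α] [Fintype N']
    {M : Matrix N N' α} (hrow : ∀ i, ∑ j, M i j = 0) : M *ᵥ 1 = 0 :=
  funext fun i => by simpa [mulVec, dotProduct_one] using hrow i

theorem Matrix.IsSymm.mul_sum_eq_zero_of_mulVec_eq_smul {N : Type*} [Fintype N]
    {M : Matrix N N ℝ} (hM : M.IsSymm) (hrow : ∀ i, ∑ j, M i j = 0) {w : N → ℝ} {μ : ℝ}
    (hw : M *ᵥ w = μ • w) : μ * ∑ i, w i = 0 := by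
  calc μ * ∑ i, w i = 1 ⬝ᵥ (M *ᵥ w) := by simp [hw, one_dotProduct, Finset.mul_sum]
    _ = (M *ᵥ 1) ⬝ᵥ w := by rw [dotProduct_mulVec, ← mulVec_transpose, hM.eq]
    _ = 0 := by rw [mulVec_one_eq_zero hrow, zero_dotProduct]

section Join

variable {m n : ℕ} {LX : Matrix (Fin m) (Fin m) ℝ} {LY : Matrix (Fin n) (Fin n) ℝ}

theorem joinL_mulVec_sumElim (x : Fin m → ℝ) (y : Fin n → ℝ) :
    joinL m n LX LY *ᵥ Sum.elim x y =
      Sum.elim (LX *ᵥ x + (n : ℝ) • x - (∑ j, y j) • 1)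
        (LY *ᵥ y + (m : ℝ) • y - (∑ j, x j) • 1) := by
  rw [joinL, fromBlocks_mulVec]
  congr 1 <;> funext i <;>
    simp [add_mulVec, smul_mulVec, mulVec, dotProduct] <;> ring

theorem joinL_mulVec_inl_of_sum_eq_zero {x : Fin m → ℝ} {lam : ℝ} (hx : LX *ᵥ x = lam • x)
    (hsum : ∑ j, x j = 0) :
    joinL m n LX LY *ᵥ Sum.elim x 0 = (lam + n) • Sum.elim x 0 := by
  rw [joinL_mulVec_sumElim, hx, hsum]
  funext i
  cases i <;> simp [add_mul]

theorem joinL_mulVec_inr_of_sum_eq_zero {y : Fin n → ℝ} {μ : ℝ} (hy : LY *ᵥ y = μ • y)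
    (hsum : ∑ j, y j = 0) :
    joinL m n LX LY *ᵥ Sum.elim (0 : Fin m → ℝ) y = (μ + m) • Sum.elim (0 : Fin m → ℝ) y := by
  rw [joinL_mulVec_sumElim, hy, hsum]
  funext i
  cases i <;> simp [add_mul]

theorem sumElim_one_zero_mem_intEigenvectorSpan_joinL (hXrow : ∀ i, ∑ j, LX i j = 0)
    (hYrow : ∀ i, ∑ j, LY i j = 0) (hmn : (m : ℝ) + n ≠ 0) :
    Sum.elim (1 : Fin m → ℝ) 0 ∈ intEigenvectorSpan (joinL m n LX LY) := by
  set φ : Fin m ⊕ Fin n → ℝ := Sum.elim ((n : ℝ) • 1) (-((m : ℝ) • 1))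
  have hone : (1 : Fin m ⊕ Fin n → ℝ) ∈ intEigenvectorSpan (joinL m n LX LY) := by
    refine Submodule.subset_span ⟨0, ?_⟩
    rw [← Sum.elim_one_one, joinL_mulVec_sumElim, mulVec_one_eq_zero hXrow,
      mulVec_one_eq_zero hYrow]
    funext i
    cases i <;> simp
  have hφ : φ ∈ intEigenvectorSpan (joinL m n LX LY) := by
    refine Submodule.subset_span ⟨m + n, ?_⟩
    rw [joinL_mulVec_sumElim, mulVec_smul, mulVec_neg, mulVec_smul, mulVec_one_eq_zero hXrow,
      mulVec_one_eq_zero hYrow]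
    funext i
    cases i <;> simp [φ] <;> ring
  have hdecomp : Sum.elim (1 : Fin m → ℝ) 0 = ((m : ℝ) + n)⁻¹ • ((m : ℝ) • 1 + φ) := by
    funext i
    cases i with
    | inl => simp [φ]; field_simp
    | inr => simp [φ]
  rw [hdecomp]
  exact Submodule.smul_mem _ _ (add_mem (Submodule.smul_mem _ _ hone) hφ)

theorem isEigenvalue_joinL_add_of_isEigenvalue (hYsymm : LY.IsSymm)
    (hYrow : ∀ i, ∑ j, LY i j = 0) {μ : ℝ} (hμ : μ ≠ 0) (h : IsEigenvalue LY μ) :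
    IsEigenvalue (joinL m n LX LY) (μ + m) := by
  obtain ⟨y, hy0, hy⟩ := h
  have hsum : ∑ j, y j = 0 :=
    (mul_eq_zero.mp (hYsymm.mul_sum_eq_zero_of_mulVec_eq_smul hYrow hy)).resolve_left hμ
  refine ⟨Sum.elim 0 y, fun h0 => hy0 ?_, joinL_mulVec_inr_of_sum_eq_zero hy hsum⟩
  funext j
  exact congrFun h0 (Sum.inr j)

theorem sumElim_zero_mem_intEigenvectorSpan_joinL_of_mulVec_eq_intCast_smul
    (hXsymm : LX.IsSymm) (hXrow : ∀ i, ∑ j, LX i j = 0) (hYrow : ∀ i, ∑ j, LY i j = 0)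
    (hm : m ≠ 0) {x : Fin m → ℝ} {k : ℤ} (hx : LX *ᵥ x = (k : ℝ) • x) :
    Sum.elim x 0 ∈ intEigenvectorSpan (joinL m n LX LY) := by
  have hm' : (m : ℝ) ≠ 0 := Nat.cast_ne_zero.mpr hm
  set s := ∑ j, x j
  have hks : (k : ℝ) * s = 0 := hXsymm.mul_sum_eq_zero_of_mulVec_eq_smul hXrow hx
  -- `k * s = 0`, so subtracting the mean keeps `x` an eigenvector while making its sum vanish.
  set x' := x - (s / m) • 1
  have hx' : LX *ᵥ x' = (k : ℝ) • x' := by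
    rw [mulVec_sub, mulVec_smul, mulVec_one_eq_zero hXrow, hx]
    funext j
    simp [x', mul_sub, ← mul_div_assoc, hks]
  have hsum' : ∑ j, x' j = 0 := by
    simp [x', Finset.sum_sub_distrib, s, mul_div_cancel₀ _ hm']
  have hmem : Sum.elim x' 0 ∈ intEigenvectorSpan (joinL m n LX LY) :=
    Submodule.subset_span ⟨k + n, by push_cast; exact joinL_mulVec_inl_of_sum_eq_zero hx' hsum'⟩
  have hdecomp : Sum.elim x (0 : Fin n → ℝ) =
      Sum.elim x' 0 + (s / m) • Sum.elim (1 : Fin m → ℝ) (0 : Fin n → ℝ) := by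
    funext i
    cases i <;> simp [x']
  rw [hdecomp]
  refine add_mem hmem (Submodule.smul_mem _ _ (sumElim_one_zero_mem_intEigenvectorSpan_joinL
    hXrow hYrow ?_))
  exact_mod_cast (Nat.add_pos_left (Nat.pos_of_ne_zero hm) n).ne'

theorem sumElim_zero_mem_intEigenvectorSpan_joinL (hXsymm : LX.IsSymm)
    (hXrow : ∀ i, ∑ j, LX i j = 0) (hYrow : ∀ i, ∑ j, LY i j = 0)
    (hXint : ∀ lam : ℝ, IsEigenvalue LX lam → ∃ z : ℤ, lam = z) (hm : m ≠ 0)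
    (x : Fin m → ℝ) : Sum.elim x 0 ∈ intEigenvectorSpan (joinL m n LX LY) := by
  have hx : x ∈ intEigenvectorSpan LX := by
    rw [(isHermitian_iff_isSymm.mpr hXsymm).intEigenvectorSpan_eq_top hXint]
    trivial
  induction hx using Submodule.span_induction with
  | mem w hw =>
    obtain ⟨k, hk⟩ := hw
    exact sumElim_zero_mem_intEigenvectorSpan_joinL_of_mulVec_eq_intCast_smul
      hXsymm hXrow hYrow hm hk
  | zero => simp
  | add x y _ _ hx hy =>
    simpa [← Sum.elim_add_add] using add_mem hx hy
  | smul a x _ hx =>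
    have hax : Sum.elim (a • x) (0 : Fin n → ℝ) = a • Sum.elim x 0 := by
      funext i
      cases i <;> simp
    rw [hax]
    exact Submodule.smul_mem _ _ hx

end Join

theorem stmt9_general (m n : ℕ)
    (LX : Matrix (Fin m) (Fin m) ℝ) (LY : Matrix (Fin n) (Fin n) ℝ)
    (hLXsymm : LX.IsSymm) (hLXrow : ∀ i, ∑ j, LX i j = 0)
    (hLYsymm : LY.IsSymm) (hLYrow : ∀ i, ∑ j, LY i j = 0)
    (hXint : ∀ lam : ℝ, IsEigenvalue LX lam → ∃ z : ℤ, lam = (z : ℝ))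
    (hYnotint : ∃ lam : ℝ, IsEigenvalue LY lam ∧ ¬∃ z : ℤ, lam = (z : ℝ)) :
    (∃ lam : ℝ, IsEigenvalue (joinL m n LX LY) lam ∧ ¬∃ z : ℤ, lam = (z : ℝ)) ∧
      ∀ u : Fin m, PeriodicAt (joinL m n LX LY) (Sum.inl u) := by
  obtain ⟨μ, hμY, hμ⟩ := hYnotint
  have hμ0 : μ ≠ 0 := fun h => hμ ⟨0, by simp [h]⟩
  refine ⟨⟨μ + m, isEigenvalue_joinL_add_of_isEigenvalue hLYsymm hLYrow hμ0 hμY, ?_⟩, fun u => ?_⟩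
  · rintro ⟨z, hz⟩
    exact hμ ⟨z - m, by push_cast; linarith⟩
  · apply periodicAt_of_single_mem_intEigenvectorSpan
    rw [← Sum.elim_single_zero]
    exact sumElim_zero_mem_intEigenvectorSpan_joinL hLXsymm hLXrow hLYrow hXint
      u.pos.ne' _

theorem stmt9 (m n : ℕ) (hm : 1 ≤ m) (hn : 1 ≤ n)
    (LX : Matrix (Fin m) (Fin m) ℝ) (LY : Matrix (Fin n) (Fin n) ℝ)
    (hLXsymm : LX.IsSymm) (hLXrow : ∀ i, ∑ j, LX i j = 0)
    (hLYsymm : LY.IsSymm) (hLYrow : ∀ i, ∑ j, LY i j = 0)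
    (hXint : ∀ lam : ℝ, IsEigenvalue LX lam → ∃ z : ℤ, lam = (z : ℝ))
    (hYnotint : ∃ lam : ℝ, IsEigenvalue LY lam ∧ ¬∃ z : ℤ, lam = (z : ℝ)) :
    (∃ lam : ℝ, IsEigenvalue (joinL m n LX LY) lam ∧ ¬∃ z : ℤ, lam = (z : ℝ)) ∧
      ∀ u : Fin m, PeriodicAt (joinL m n LX LY) (Sum.inl u) :=
  stmt9_general m n LX LY hLXsymm hLXrow hLYsymm hLYrow hXint hYnotint
end
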